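/- arXiv:math/0304087 — 5 statements merged into one kernel-verified Lean document; each statement's English description precedes it below -/
import Mathlib

section
/- Every open τ-cover of a set X of real numbers contains a countable subfamily which is a τ-cover of X. -/
/-!
Being a τ-cover passes to every subfamily that is still large, so it suffices to extract a
countable large subfamily. Fix a countable base of `ℝ`. For each basic set `B`, keep countably
many of the members of `𝒰` containing `B`: infinitely many if there are infinitely many, all
of them otherwise. If some basic neighbourhood of `x` lies in infinitely many members, `x` is
in infinitely many kept sets; if not, every member containing `x` contains such a `B` and
was kept.
-/

open Set

/-- `𝒰` is an open cover of `X`: a family of open sets whose union contains `X`,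
with `X` itself not a member. -/
def IsOpenCover (X : Set ℝ) (𝒰 : Set (Set ℝ)) : Prop :=
  (∀ U ∈ 𝒰, IsOpen U) ∧ X ⊆ ⋃₀ 𝒰 ∧ X ∉ 𝒰

/-- A large cover: an open cover each of whose points belongs to infinitely many members. -/
def IsLargeCover (X : Set ℝ) (𝒰 : Set (Set ℝ)) : Prop :=
  IsOpenCover X 𝒰 ∧ ∀ x ∈ X, {U ∈ 𝒰 | x ∈ U}.Infinite

/-- A γ-cover: an infinite open cover such that each point of `X` belongs to all but
finitely many members. -/
def IsGammaCover (X : Set ℝ) (𝒰 : Set (Set ℝ)) : Prop :=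
  IsOpenCover X 𝒰 ∧ 𝒰.Infinite ∧ ∀ x ∈ X, {U ∈ 𝒰 | x ∉ U}.Finite

/-- An ω-cover: an open cover such that every finite subset of `X` is contained in some member. -/
def IsOmegaCover (X : Set ℝ) (𝒰 : Set (Set ℝ)) : Prop :=
  IsOpenCover X 𝒰 ∧ ∀ F : Set ℝ, F.Finite → F ⊆ X → ∃ U ∈ 𝒰, F ⊆ U

/-- A τ-cover: a large cover such that for all `x, y ∈ X`, at least one of
`{U ∈ 𝒰 | x ∈ U, y ∉ U}` and `{U ∈ 𝒰 | y ∈ U, x ∉ U}` is finite. -/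
def IsTauCover (X : Set ℝ) (𝒰 : Set (Set ℝ)) : Prop :=
  IsLargeCover X 𝒰 ∧
    ∀ x ∈ X, ∀ y ∈ X,
      {U ∈ 𝒰 | x ∈ U ∧ y ∉ U}.Finite ∨ {U ∈ 𝒰 | y ∈ U ∧ x ∉ U}.Finite

open TopologicalSpace

theorem Set.exists_countable_subset_infinite_or_eq {α : Type*} (s : Set α) :
    ∃ t ⊆ s, t.Countable ∧ (t.Infinite ∨ t = s) := by
  rcases s.finite_or_infinite with hs | hs
  · exact ⟨s, subset_rfl, hs.countable, Or.inr rfl⟩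
  · obtain ⟨t, hts, htc, hti⟩ := hs.exists_subset_countable_infinite
    exact ⟨t, hts, htc, Or.inl hti⟩

theorem exists_countable_subset_infinite_mem_of_isOpen {α : Type*} [TopologicalSpace α]
    [SecondCountableTopology α] {𝒰 : Set (Set α)} (hopen : ∀ U ∈ 𝒰, IsOpen U) :
    ∃ 𝒱 ⊆ 𝒰, 𝒱.Countable ∧
      ∀ x, {U ∈ 𝒰 | x ∈ U}.Infinite → {U ∈ 𝒱 | x ∈ U}.Infinite := by
  obtain ⟨b, hbc, -, hb⟩ := exists_countable_basis α
  choose T hTsub hTc hT using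
    fun B : Set α ↦ exists_countable_subset_infinite_or_eq {U ∈ 𝒰 | B ⊆ U}
  have hT𝒰 : ∀ B, T B ⊆ 𝒰 := fun B U hU ↦ (hTsub B hU).1
  refine ⟨⋃ B ∈ b, T B, iUnion₂_subset fun B _ ↦ hT𝒰 B, hbc.biUnion fun B _ ↦ hTc B, ?_⟩
  intro x hx
  by_cases hbig : ∃ B ∈ b, x ∈ B ∧ {U ∈ 𝒰 | B ⊆ U}.Infinite
  · obtain ⟨B, hBb, hxB, hBinf⟩ := hbig
    have hTinf : (T B).Infinite := (hT B).elim id fun h ↦ h ▸ hBinf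
    exact hTinf.mono fun U hU ↦ ⟨mem_biUnion hBb hU, (hTsub B hU).2 hxB⟩
  · push Not at hbig
    refine hx.mono ?_
    rintro U ⟨hU𝒰, hxU⟩
    refine ⟨?_, hxU⟩
    obtain ⟨B, hBb, hxB, hBU⟩ := hb.exists_subset_of_mem_open hxU (hopen U hU𝒰)
    have hTB : T B = {U ∈ 𝒰 | B ⊆ U} :=
      (hT B).resolve_left fun hinf ↦ hinf ((hbig B hBb hxB).subset (hTsub B))
    exact mem_biUnion hBb (hTB ▸ ⟨hU𝒰, hBU⟩)

theorem IsTauCover.of_subset {X : Set ℝ} {𝒰 𝒱 : Set (Set ℝ)} (h : IsTauCover X 𝒰)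
    (h𝒱 : 𝒱 ⊆ 𝒰) (hlarge : ∀ x ∈ X, {U ∈ 𝒱 | x ∈ U}.Infinite) : IsTauCover X 𝒱 := by
  obtain ⟨⟨⟨hopen, -, hX⟩, -⟩, htau⟩ := h
  refine ⟨⟨⟨fun U hU ↦ hopen U (h𝒱 hU), fun x hx ↦ ?_, fun hX𝒱 ↦ hX (h𝒱 hX𝒱)⟩, hlarge⟩,
    fun x hx y hy ↦ (htau x hx y hy).imp ?_ ?_⟩
  · obtain ⟨U, hU𝒱, hxU⟩ := (hlarge x hx).nonempty
    exact mem_sUnion_of_mem hxU hU𝒱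
  all_goals exact fun hfin ↦ hfin.subset fun U hU ↦ ⟨h𝒱 hU.1, hU.2⟩

/-- Every open τ-cover of a set `X` of reals contains a countable subfamily which is
a τ-cover of `X`. -/
theorem tau_cover_has_countable_tau_subcover (X : Set ℝ) (𝒰 : Set (Set ℝ))
    (h : IsTauCover X 𝒰) :
    ∃ 𝒱 ⊆ 𝒰, 𝒱.Countable ∧ IsTauCover X 𝒱 := by
  obtain ⟨𝒱, h𝒱𝒰, h𝒱c, h𝒱⟩ := exists_countable_subset_infinite_mem_of_isOpen h.1.1.1
  exact ⟨𝒱, h𝒱𝒰, h𝒱c, h.of_subset h𝒱𝒰 fun x hx ↦ h𝒱 x (h.1.2 x hx)⟩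
end

section
/- If a set X of real numbers satisfies Sfin(Γ,T), then X satisfies Ufin(Γ,T). -/
open Set

/-- `Sfin A B X`: for every sequence of countable open covers of `X` of type `A`
one can pick a finite subset from each so that the union of the choices is a cover of type `B`. -/
def Sfin (A B : Set ℝ → Set (Set ℝ) → Prop) (X : Set ℝ) : Prop :=
  ∀ 𝒰 : ℕ → Set (Set ℝ), (∀ n, (𝒰 n).Countable ∧ A X (𝒰 n)) →
    ∃ F : ℕ → Set (Set ℝ), (∀ n, F n ⊆ 𝒰 n ∧ (F n).Finite) ∧ B X (⋃ n, F n)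

/-- `Ufin B X`: for every sequence of countable open γ-covers of `X` there are finite
subsets `Fₙ ⊆ 𝒰ₙ` such that either `⋃ Fₙ = X` for some `n`, or `{⋃ Fₙ : n ∈ ℕ}` is a
cover of type `B`. -/
def Ufin (B : Set ℝ → Set (Set ℝ) → Prop) (X : Set ℝ) : Prop :=
  ∀ 𝒰 : ℕ → Set (Set ℝ), (∀ n, (𝒰 n).Countable ∧ IsGammaCover X (𝒰 n)) →
    ∃ F : ℕ → Set (Set ℝ), (∀ n, F n ⊆ 𝒰 n ∧ (F n).Finite) ∧
      ((∃ n, ⋃₀ (F n) = X) ∨ B X (Set.range fun n => ⋃₀ (F n)))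

section Helpers

variable {X : Set ℝ}

/-- In an infinite subfamily of a γ-cover, every point of `X` belongs to some member. -/
lemma mem_of_infinite_sub {𝒰 S : Set (Set ℝ)} (hS : S ⊆ 𝒰) (hSinf : S.Infinite)
    (hγ : ∀ x ∈ X, {U ∈ 𝒰 | x ∉ U}.Finite) {x : ℝ} (hx : x ∈ X) :
    ∃ U ∈ S, x ∈ U := by
  by_contra hcon
  push_neg at hcon
  have : S ⊆ {U ∈ 𝒰 | x ∉ U} := fun U hU => ⟨hS hU, hcon U hU⟩
  exact hSinf ((hγ x hx).subset this)

lemma subset_sUnion_of_infinite_sub {𝒰 S : Set (Set ℝ)} (hS : S ⊆ 𝒰) (hSinf : S.Infinite)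
    (hγ : ∀ x ∈ X, {U ∈ 𝒰 | x ∉ U}.Finite) : X ⊆ ⋃₀ S := by
  intro x hx
  obtain ⟨U, hU, hxU⟩ := mem_of_infinite_sub hS hSinf hγ hx
  exact ⟨U, hU, hxU⟩

/-- Generic greedy extraction: if an ℕ-indexed family of values over an infinite index set
has infinite image, we can extract an injective index sequence with injective values. -/
lemma exists_fresh_seq {β : Type*} (N : Set ℕ) (v : ℕ → β)
    (hbig : ∀ B : Set β, B.Finite → ∃ n ∈ N, v n ∉ B) :
    ∃ s : ℕ → ℕ, (∀ k, s k ∈ N) ∧ Function.Injective (fun k => v (s k)) := by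
  classical
  have key : ∀ (l : List ℕ), ∃ n ∈ N, v n ∉ {b | ∃ m ∈ l, v m = b} := by
    intro l
    apply hbig
    have : {b | ∃ m ∈ l, v m = b} = (fun m => v m) '' {m | m ∈ l} := by
      ext b; simp [Set.mem_image]
    rw [this]
    exact (List.finite_toSet l).image _
  let pick : List ℕ → ℕ := fun l => (key l).choose
  have pickN : ∀ l, pick l ∈ N := fun l => (key l).choose_spec.1
  have pickF : ∀ l, ∀ m ∈ l, v m ≠ v (pick l) := by
    intro l m hm he
    exact (key l).choose_spec.2 ⟨m, hm, he⟩
  let g : ℕ → List ℕ := fun k => Nat.rec [] (fun _ prev => prev ++ [pick prev]) k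
  have hg : ∀ k, g (k+1) = g k ++ [pick (g k)] := fun k => rfl
  let s : ℕ → ℕ := fun k => pick (g k)
  have hmem : ∀ j k, j < k → s j ∈ g k := by
    intro j k
    induction k with
    | zero => omega
    | succ k ih =>
      intro hjk
      rw [hg]
      rcases Nat.lt_or_ge j k with h | h
      · exact List.mem_append_left _ (ih h)
      · have : j = k := by omega
        subst this
        exact List.mem_append_right _ (List.mem_singleton.mpr rfl)
  have fresh : ∀ j k, j < k → v (s k) ≠ v (s j) := by
    intro j k hjk he
    exact pickF (g k) (s j) (hmem j k hjk) he.symm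
  refine ⟨s, fun k => pickN (g k), ?_⟩
  intro a b hab
  simp only at hab
  by_contra hne
  rcases Nat.lt_or_ge a b with h | h
  · exact fresh a b h hab.symm
  · exact fresh b a (lt_of_le_of_ne h (Ne.symm hne)) hab

end Helpers

section Construction

variable {X : Set ℝ}

/-- Key finiteness: members `U` of a γ-cover with `B ∪ U = Y` for a fixed `Y` not containing `X`
form a finite set. -/
lemma bad_finite {𝒰 : Set (Set ℝ)} (h𝒰 : IsGammaCover X 𝒰) (B Y : Set ℝ) (hY : ¬ X ⊆ Y) :
    {U ∈ 𝒰 | B ∪ U = Y}.Finite := by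
  by_contra hinf
  have hinf : {U ∈ 𝒰 | B ∪ U = Y}.Infinite := hinf
  apply hY
  have hsub : {U ∈ 𝒰 | B ∪ U = Y} ⊆ 𝒰 := fun U hU => hU.1
  have hcov : X ⊆ ⋃₀ {U ∈ 𝒰 | B ∪ U = Y} :=
    subset_sUnion_of_infinite_sub hsub hinf h𝒰.2.2
  intro x hx
  obtain ⟨U, hU, hxU⟩ := hcov hx
  have : U ⊆ Y := by
    rw [← hU.2]; exact subset_union_right
  exact this hxU

/-- The set of values from previous entries whose family index is `m ≠ n`. -/
def famOf (l : List (ℕ × Set ℝ)) (n : ℕ) : Set (Set ℝ) := {V | (n, V) ∈ l}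

lemma famOf_finite (l : List (ℕ × Set ℝ)) (n : ℕ) : (famOf l n).Finite := by
  have : famOf l n ⊆ (fun p : ℕ × Set ℝ => p.2) '' {p | p ∈ l} := by
    intro V hV; exact ⟨(n, V), hV, rfl⟩
  exact ((List.finite_toSet l).image _).subset this

/-- The greedy step: a fresh member avoiding all dangerous value collisions exists. -/
lemma step_exists (𝒰 : ℕ → Set (Set ℝ)) (h𝒰 : ∀ n, IsGammaCover X (𝒰 n))
    (l : List (ℕ × Set ℝ)) (n : ℕ) :
    ∃ U ∈ 𝒰 n, (∀ p ∈ l, p.2 ≠ U) ∧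
      (∀ A : Set (Set ℝ), A ⊆ famOf l n → ∀ m, m ≠ n →
        ∀ E' : Set (Set ℝ), E' ⊆ famOf l m → E'.Nonempty → ¬ X ⊆ ⋃₀ E' →
          ⋃₀ A ∪ U ≠ ⋃₀ E') := by
  classical
  -- all achievable "old" values
  set allsets : Set (Set ℝ) := (fun p : ℕ × Set ℝ => p.2) '' {p | p ∈ l} with hallsets
  have hallfin : allsets.Finite := (List.finite_toSet l).image _
  set 𝒴 : Set (Set ℝ) := (fun E' => ⋃₀ E') '' {E' | E' ⊆ allsets} with h𝒴
  have h𝒴fin : 𝒴.Finite := (Set.Finite.finite_subsets hallfin).image _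
  set 𝒜 : Set (Set (Set ℝ)) := {A | A ⊆ famOf l n} with h𝒜
  have h𝒜fin : 𝒜.Finite := Set.Finite.finite_subsets (famOf_finite l n)
  set Forb : Set (Set ℝ) :=
    allsets ∪ ⋃ A ∈ 𝒜, ⋃ Y ∈ {Y ∈ 𝒴 | ¬ X ⊆ Y}, {U ∈ 𝒰 n | ⋃₀ A ∪ U = Y} with hForb
  have hForbfin : Forb.Finite := by
    apply Set.Finite.union hallfin
    apply Set.Finite.biUnion h𝒜fin
    intro A _
    apply Set.Finite.biUnion (h𝒴fin.subset (fun Y hY => hY.1))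
    intro Y hY
    exact bad_finite (h𝒰 n) (⋃₀ A) Y hY.2
  obtain ⟨U, hU⟩ := ((h𝒰 n).2.1.diff hForbfin).nonempty
  refine ⟨U, hU.1, ?_, ?_⟩
  · intro p hp he
    exact hU.2 (Or.inl ⟨p, hp, he⟩)
  · intro A hA m hm E' hE' hE'ne hXE' heq
    apply hU.2
    refine Or.inr ?_
    refine Set.mem_biUnion (show A ∈ 𝒜 from hA) ?_
    refine Set.mem_biUnion (show ⋃₀ E' ∈ {Y ∈ 𝒴 | ¬ X ⊆ Y} from ?_) ⟨hU.1, heq⟩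
    refine ⟨⟨E', ?_, rfl⟩, hXE'⟩
    intro V hV
    exact ⟨(m, V), hE' hV, rfl⟩

/-- Main construction: pairwise disjoint infinite subfamilies such that any
cross-index value collision forces the value to contain `X`. -/
lemma exists_good_subfamilies (𝒰 : ℕ → Set (Set ℝ)) (h𝒰 : ∀ n, IsGammaCover X (𝒰 n)) :
    ∃ 𝒰' : ℕ → Set (Set ℝ),
      (∀ n, 𝒰' n ⊆ 𝒰 n) ∧ (∀ n, (𝒰' n).Infinite) ∧
      (∀ n m, n ≠ m → Disjoint (𝒰' n) (𝒰' m)) ∧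
      (∀ n m, n ≠ m → ∀ E E' : Set (Set ℝ), E.Finite → E'.Finite →
        E.Nonempty → E'.Nonempty → E ⊆ 𝒰' n → E' ⊆ 𝒰' m → ⋃₀ E = ⋃₀ E' → X ⊆ ⋃₀ E') := by
  classical
  set pick : List (ℕ × Set ℝ) → ℕ → Set ℝ :=
    fun l n => (step_exists 𝒰 h𝒰 l n).choose with hpick
  have pickspec : ∀ l n, pick l n ∈ 𝒰 n ∧ (∀ p ∈ l, p.2 ≠ pick l n) ∧
      (∀ A : Set (Set ℝ), A ⊆ famOf l n → ∀ m, m ≠ n →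
        ∀ E' : Set (Set ℝ), E' ⊆ famOf l m → E'.Nonempty → ¬ X ⊆ ⋃₀ E' →
          ⋃₀ A ∪ pick l n ≠ ⋃₀ E') :=
    fun l n => by
      obtain ⟨h1, h2, h3⟩ := (step_exists 𝒰 h𝒰 l n).choose_spec
      exact ⟨h1, h2, h3⟩
  set g : ℕ → List (ℕ × Set ℝ) :=
    fun t => Nat.rec [] (fun t prev => prev ++ [((Nat.unpair t).1, pick prev (Nat.unpair t).1)]) t
    with hgdef
  have hg : ∀ t, g (t+1) = g t ++ [((Nat.unpair t).1, pick (g t) (Nat.unpair t).1)] :=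
    fun t => rfl
  have gmono : ∀ s t, s ≤ t → ∀ p, p ∈ g s → p ∈ g t := by
    intro s t hst
    induction t with
    | zero => intro p hp; have : s = 0 := by omega
              subst this; exact hp
    | succ t ih =>
      intro p hp
      rcases Nat.lt_or_ge s (t+1) with h | h
      · rw [hg]; exact List.mem_append_left _ (ih (by omega) p hp)
      · have : s = t+1 := by omega
        subst this; exact hp
  -- every entry belongs to its cover
  have gmem : ∀ t, ∀ p ∈ g t, p.2 ∈ 𝒰 p.1 := by
    intro t
    induction t with
    | zero => intro p hp; simp [hgdef] at hp
    | succ t ih =>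
      intro p hp
      rw [hg] at hp
      rcases List.mem_append.mp hp with h | h
      · exact ih p h
      · rw [List.mem_singleton.mp h]
        exact (pickspec (g t) (Nat.unpair t).1).1
  -- all values are pairwise distinct
  have gdist : ∀ t, ∀ p ∈ g t, ∀ q ∈ g t, p.2 = q.2 → p = q := by
    intro t
    induction t with
    | zero => intro p hp; simp [hgdef] at hp
    | succ t ih =>
      intro p hp q hq he
      rw [hg] at hp hq
      rcases List.mem_append.mp hp with h1 | h1 <;> rcases List.mem_append.mp hq with h2 | h2
      · exact ih p h1 q h2 he
      · exfalso
        rw [List.mem_singleton.mp h2] at he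
        exact (pickspec (g t) (Nat.unpair t).1).2.1 p h1 he
      · exfalso
        rw [List.mem_singleton.mp h1] at he
        exact (pickspec (g t) (Nat.unpair t).1).2.1 q h2 he.symm
      · rw [List.mem_singleton.mp h1, List.mem_singleton.mp h2]
  set 𝒰' : ℕ → Set (Set ℝ) := fun n => {V | ∃ t, (n, V) ∈ g t} with h𝒰'
  have hsub' : ∀ n, 𝒰' n ⊆ 𝒰 n := by
    intro n V hV
    obtain ⟨t, ht⟩ := hV
    exact gmem t (n, V) ht
  -- entries at stage pair n k
  have hstage : ∀ n k, (n, pick (g (Nat.pair n k)) n) ∈ g (Nat.pair n k + 1) := by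
    intro n k
    rw [hg]
    have : (Nat.unpair (Nat.pair n k)).1 = n := by simp
    rw [this]
    exact List.mem_append_right _ (List.mem_singleton.mpr rfl)
  have hinf' : ∀ n, (𝒰' n).Infinite := by
    intro n
    have key : ∀ a b : ℕ, a < b → pick (g (Nat.pair n a)) n ≠ pick (g (Nat.pair n b)) n := by
      intro a b hab' he
      have h1 : (n, pick (g (Nat.pair n a)) n) ∈ g (Nat.pair n b) := by
        apply gmono (Nat.pair n a + 1) (Nat.pair n b)
        · have := Nat.pair_lt_pair_right n hab'
          omega
        · exact hstage n a
      exact (pickspec (g (Nat.pair n b)) n).2.1 _ h1 he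
    have hinj : Function.Injective (fun k : ℕ => pick (g (Nat.pair n k)) n) := by
      intro a b hab
      by_contra hne
      simp only at hab
      rcases Nat.lt_or_ge a b with h | h
      · exact key a b h hab
      · exact key b a (lt_of_le_of_ne h (Ne.symm hne)) hab.symm
    exact Set.infinite_of_injective_forall_mem hinj
      (fun k => ⟨Nat.pair n k + 1, hstage n k⟩)
  have hdisj : ∀ n m, n ≠ m → Disjoint (𝒰' n) (𝒰' m) := by
    intro n m hnm
    rw [Set.disjoint_left]
    intro V hVn hVm
    obtain ⟨t, ht⟩ := hVn
    obtain ⟨s, hs⟩ := hVm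
    have h1 : (n, V) ∈ g (max t s) := gmono t _ (le_max_left _ _) _ ht
    have h2 : (m, V) ∈ g (max t s) := gmono s _ (le_max_right _ _) _ hs
    have := gdist (max t s) (n, V) h1 (m, V) h2 rfl
    exact hnm (congrArg Prod.fst this)
  -- the invariant at each stage
  have hINVt : ∀ t, ∀ n m, n ≠ m → ∀ E E' : Set (Set ℝ),
      E.Nonempty → E'.Nonempty → E ⊆ famOf (g t) n → E' ⊆ famOf (g t) m →
      ⋃₀ E = ⋃₀ E' → X ⊆ ⋃₀ E' := by
    intro t
    induction t with
    | zero =>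
      intro n m hnm E E' hEne hE'ne hE hE' heq
      exfalso
      obtain ⟨V, hV⟩ := hEne
      have h0 : g 0 = [] := rfl
      have := hE hV
      simp [famOf, h0] at this
    | succ t ih =>
      intro n m hnm E E' hEne hE'ne hE hE' heq
      set n₀ := (Nat.unpair t).1 with hn₀
      set U := pick (g t) n₀ with hU
      -- membership in stage t+1 families
      have hfam : ∀ a V, V ∈ famOf (g (t+1)) a → V ∈ famOf (g t) a ∨ (a = n₀ ∧ V = U) := by
        intro a V hV
        have : (a, V) ∈ g t ++ [(n₀, U)] := by rw [← hg]; exact hV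
        rcases List.mem_append.mp this with h | h
        · exact Or.inl h
        · have := List.mem_singleton.mp h
          exact Or.inr ⟨congrArg Prod.fst this, congrArg Prod.snd this⟩
      by_contra hXE'
      -- U cannot be in both E and E' (families disjoint at stage level)
      by_cases hUE : n = n₀ ∧ U ∈ E
      · -- E contains the new element
        obtain ⟨hn, hUmem⟩ := hUE
        have hA : E \ {U} ⊆ famOf (g t) n₀ := by
          intro V hV
          rcases hfam n V (hE hV.1) with h | h
          · rw [← hn]; exact h
          · exact absurd h.2 hV.2
        have hE'old : E' ⊆ famOf (g t) m := by
          intro V hV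
          rcases hfam m V (hE' hV) with h | h
          · exact h
          · exfalso; apply hnm; rw [hn, h.1]
        have hmn₀ : m ≠ n₀ := by rw [← hn]; exact Ne.symm hnm
        have hEeq : ⋃₀ E = ⋃₀ (E \ {U}) ∪ U := by
          ext z
          simp only [Set.mem_sUnion, Set.mem_union, Set.mem_diff, Set.mem_singleton_iff]
          constructor
          · rintro ⟨V, hV, hz⟩
            by_cases hVU : V = U
            · right; rw [← hVU]; exact hz
            · left; exact ⟨V, ⟨hV, hVU⟩, hz⟩
          · rintro (⟨V, ⟨hV, _⟩, hz⟩ | hz)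
            · exact ⟨V, hV, hz⟩
            · exact ⟨U, hUmem, hz⟩
        exact (pickspec (g t) n₀).2.2 (E \ {U}) hA m hmn₀ E' hE'old hE'ne hXE'
          (by rw [← hEeq]; exact heq)
      · -- E is old; check whether E' contains the new element
        have hEold : E ⊆ famOf (g t) n := by
          intro V hV
          rcases hfam n V (hE hV) with h | h
          · exact h
          · exfalso
            apply hUE
            refine ⟨h.1, ?_⟩
            rw [← h.2]; exact hV
        by_cases hUE' : m = n₀ ∧ U ∈ E'
        · obtain ⟨hm, hUmem⟩ := hUE'
          have hA : E' \ {U} ⊆ famOf (g t) n₀ := by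
            intro V hV
            rcases hfam m V (hE' hV.1) with h | h
            · rw [← hm]; exact h
            · exact absurd h.2 hV.2
          have hnn₀ : n ≠ n₀ := by rw [← hm]; exact hnm
          have hE'eq : ⋃₀ E' = ⋃₀ (E' \ {U}) ∪ U := by
            ext z
            simp only [Set.mem_sUnion, Set.mem_union, Set.mem_diff, Set.mem_singleton_iff]
            constructor
            · rintro ⟨V, hV, hz⟩
              by_cases hVU : V = U
              · right; rw [← hVU]; exact hz
              · left; exact ⟨V, ⟨hV, hVU⟩, hz⟩
            · rintro (⟨V, ⟨hV, _⟩, hz⟩ | hz)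
              · exact ⟨V, hV, hz⟩
              · exact ⟨U, hUmem, hz⟩
          have hXE : ¬ X ⊆ ⋃₀ E := by rw [heq]; exact hXE'
          exact (pickspec (g t) n₀).2.2 (E' \ {U}) hA n hnn₀ E hEold hEne hXE
            (by rw [← hE'eq]; exact heq.symm)
        · have hE'old : E' ⊆ famOf (g t) m := by
            intro V hV
            rcases hfam m V (hE' hV) with h | h
            · exact h
            · exfalso
              apply hUE'
              refine ⟨h.1, ?_⟩
              rw [← h.2]; exact hV
          exact hXE' (ih n m hnm E E' hEne hE'ne hEold hE'old heq)
  refine ⟨𝒰', hsub', hinf', hdisj, ?_⟩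
  intro n m hnm E E' hEfin hE'fin hEne hE'ne hEsub hE'sub heq
  -- lift finite families to a common stage
  have hlift : ∀ (a : ℕ) (E₀ : Set (Set ℝ)), E₀.Finite → (∀ V ∈ E₀, ∃ t, (a, V) ∈ g t) →
      ∃ T, ∀ V ∈ E₀, (a, V) ∈ g T := by
    intro a E₀ hfin hall
    set tf : Set ℝ → ℕ := fun V => if h : ∃ t, (a, V) ∈ g t then h.choose else 0 with htf
    have htf' : ∀ V ∈ E₀, (a, V) ∈ g (tf V) := by
      intro V hV
      have h := hall V hV
      simp only [htf, dif_pos h]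
      exact h.choose_spec
    obtain ⟨T, hT⟩ := (hfin.image tf).bddAbove
    refine ⟨T, fun V hV => gmono (tf V) T ?_ _ (htf' V hV)⟩
    exact hT ⟨V, hV, rfl⟩
  obtain ⟨T₁, hT₁⟩ := hlift n E hEfin (fun V hV => hEsub hV)
  obtain ⟨T₂, hT₂⟩ := hlift m E' hE'fin (fun V hV => hE'sub hV)
  exact hINVt (max T₁ T₂) n m hnm E E' hEne hE'ne
    (fun V hV => gmono T₁ _ (le_max_left _ _) _ (hT₁ V hV))
    (fun V hV => gmono T₂ _ (le_max_right _ _) _ (hT₂ V hV)) heq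

end Construction

/-- Minimal covering subfamily of a finite cover. -/
lemma exists_minimal_cover {X : Set ℝ} (hXne : X.Nonempty) (G : Set (Set ℝ)) (hG : G.Finite)
    (hcov : X ⊆ ⋃₀ G) :
    ∃ H ⊆ G, X ⊆ ⋃₀ H ∧ ∀ W ∈ H, ¬ X ⊆ ⋃₀ (H \ {W}) := by
  classical
  set S : Set (Set (Set ℝ)) := {H | H ⊆ G ∧ X ⊆ ⋃₀ H} with hS
  have hSne : (Set.ncard '' S).Nonempty := ⟨G.ncard, G, ⟨Set.Subset.rfl, hcov⟩, rfl⟩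
  obtain ⟨H, hHS, hHcard⟩ := Nat.sInf_mem hSne
  refine ⟨H, hHS.1, hHS.2, ?_⟩
  intro W hW hcon
  have hHfin : H.Finite := hG.subset hHS.1
  have hmem : (H \ {W}).ncard ∈ Set.ncard '' S :=
    ⟨H \ {W}, ⟨(Set.diff_subset).trans hHS.1, hcon⟩, rfl⟩
  have hlt : (H \ {W}).ncard < H.ncard :=
    Set.ncard_diff_singleton_lt_of_mem hW hHfin
  rw [hHcard] at hlt
  exact Nat.notMem_of_lt_sInf hlt hmem

/-- `Sfin(Γ,T)` implies `Ufin(Γ,T)`. -/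
theorem sfin_gamma_tau_implies_ufin_gamma_tau (X : Set ℝ)
    (h : Sfin IsGammaCover IsTauCover X) : Ufin IsTauCover X := by
  classical
  intro 𝒰 h𝒰
  -- trivial case : X = ∅
  by_cases hXe : X = ∅
  · refine ⟨fun _ => ∅, fun n => ⟨empty_subset _, finite_empty⟩, Or.inl ⟨0, by simp [hXe]⟩⟩
  have hXne : X.Nonempty := Set.nonempty_iff_ne_empty.mpr hXe
  -- case I : an exact finite cover exists
  by_cases hI : ∃ n, ∃ F : Set (Set ℝ), F ⊆ 𝒰 n ∧ F.Finite ∧ ⋃₀ F = X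
  · obtain ⟨n₀, F₀, h1, h2, h3⟩ := hI
    refine ⟨fun n => if n = n₀ then F₀ else ∅, fun n => ?_, Or.inl ⟨n₀, by simp [h3]⟩⟩
    by_cases hn : n = n₀
    · simp [hn, h1, h2]
    · simp [hn]
  push_neg at hI
  -- hI : ∀ n F, F ⊆ 𝒰 n → F.Finite → ⋃₀ F ≠ X
  have hγ : ∀ n, IsGammaCover X (𝒰 n) := fun n => (h𝒰 n).2
  -- good subfamilies
  obtain ⟨𝒰', hsub', hinf', hdisj', hINV⟩ := exists_good_subfamilies 𝒰 hγ
  have h𝒰'γ : ∀ n, (𝒰' n).Countable ∧ IsGammaCover X (𝒰' n) := by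
    intro n
    refine ⟨(h𝒰 n).1.mono (hsub' n), ⟨fun U hU => (hγ n).1.1 U (hsub' n hU), ?_, ?_⟩,
      (hinf' n), fun x hx => ((hγ n).2.2 x hx).subset ?_⟩
    · exact subset_sUnion_of_infinite_sub (hsub' n) (hinf' n) (hγ n).2.2
    · intro hmem
      exact (hγ n).1.2.2 (hsub' n hmem)
    · intro U hU
      exact ⟨hsub' n hU.1, hU.2⟩
  -- apply the Sfin hypothesis
  obtain ⟨F, hF, hτ⟩ := h 𝒰' h𝒰'γ
  set 𝒯 : Set (Set ℝ) := ⋃ n, F n with h𝒯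
  -- basic facts about F
  have hFsub : ∀ n, F n ⊆ 𝒰' n := fun n => (hF n).1
  have hFfin : ∀ n, (F n).Finite := fun n => (hF n).2
  have hFU : ∀ n, F n ⊆ 𝒰 n := fun n => (hFsub n).trans (hsub' n)
  -- ownership: a member of 𝒯 belongs to F n for a unique n
  have howner : ∀ (W : Set ℝ) (n m : ℕ), W ∈ F n → W ∈ F m → n = m := by
    intro W n m hn hm
    by_contra hnm
    exact (Set.disjoint_left.mp (hdisj' n m hnm)) (hFsub n hn) (hFsub m hm)
  -- each x has witnesses in infinitely many blocks
  have hNx : ∀ x ∈ X, {n | ∃ W ∈ F n, x ∈ W}.Infinite := by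
    intro x hx
    by_contra hfin
    rw [Set.not_infinite] at hfin
    have hsub : {U ∈ 𝒯 | x ∈ U} ⊆ ⋃ n ∈ {n | ∃ W ∈ F n, x ∈ W}, F n := by
      rintro U ⟨hU, hxU⟩
      obtain ⟨n, hn⟩ := Set.mem_iUnion.mp hU
      exact Set.mem_biUnion ⟨U, hn, hxU⟩ hn
    exact (hτ.1.2 x hx) ((hfin.biUnion (fun n _ => hFfin n)).subset hsub)
  -- cross-index value rigidity specialized to blocks
  have hVAL : ∀ n m, n ≠ m → ∀ E E' : Set (Set ℝ), E ⊆ F n → E' ⊆ F m →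
      E.Nonempty → E'.Nonempty → ⋃₀ E = ⋃₀ E' → X ⊆ ⋃₀ E' := by
    intro n m hnm E E' hE hE' hEne hE'ne heq
    exact hINV n m hnm E E' ((hFfin n).subset hE) ((hFfin m).subset hE') hEne hE'ne
      (hE.trans (hFsub n)) (hE'.trans (hFsub m)) heq
  -- MASTER LEMMA : any sub-block selection with largeness yields a τ-cover
  have master : ∀ F' : ℕ → Set (Set ℝ), (∀ n, F' n ⊆ F n) →
      (∀ x ∈ X, {V ∈ Set.range (fun n => ⋃₀ F' n) | x ∈ V}.Infinite) →
      (∀ n, F' n ⊆ 𝒰 n ∧ (F' n).Finite) ∧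
        ((∃ n, ⋃₀ (F' n) = X) ∨ IsTauCover X (Set.range fun n => ⋃₀ (F' n))) := by
    intro F' hF'sub hlarge
    have hF'U : ∀ n, F' n ⊆ 𝒰 n ∧ (F' n).Finite :=
      fun n => ⟨(hF'sub n).trans (hFU n), (hFfin n).subset (hF'sub n)⟩
    refine ⟨hF'U, Or.inr ?_⟩
    have hXnotin : X ∉ Set.range fun n => ⋃₀ F' n := by
      rintro ⟨n, hn⟩
      have hn' : ⋃₀ F' n = X := hn
      rcases Set.eq_empty_or_nonempty (F' n) with he | hne
      · rw [he] at hn'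
        simp at hn'
        exact hXne.ne_empty hn'.symm
      · exact hI n (F' n) (hF'U n).1 (hF'U n).2 hn'
    have hopen : ∀ V ∈ Set.range fun n => ⋃₀ F' n, IsOpen V := by
      rintro V ⟨n, rfl⟩
      exact isOpen_sUnion (fun W hW => (hγ n).1.1 W ((hF'U n).1 hW))
    have hcov : X ⊆ ⋃₀ Set.range fun n => ⋃₀ F' n := by
      intro x hx
      obtain ⟨V, hV⟩ := (hlarge x hx).nonempty
      exact ⟨V, hV.1, hV.2⟩
    -- pattern transfer
    have pat : ∀ x y : ℝ, {U ∈ 𝒯 | x ∈ U ∧ y ∉ U}.Finite →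
        {V ∈ Set.range (fun n => ⋃₀ F' n) | x ∈ V ∧ y ∉ V}.Finite := by
      intro x y hA
      set own : Set ℝ → ℕ := fun W => if h : ∃ n, W ∈ F n then h.choose else 0 with hown
      have hownspec : ∀ (W : Set ℝ) (n : ℕ), W ∈ F n → own W = n := by
        intro W n hW
        have hex : ∃ n, W ∈ F n := ⟨n, hW⟩
        simp only [hown, dif_pos hex]
        exact howner W hex.choose n hex.choose_spec hW
      apply (hA.image (fun W => ⋃₀ F' (own W))).subset
      rintro V ⟨⟨n, rfl⟩, hxV, hyV⟩
      obtain ⟨W, hWF, hxW⟩ := hxV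
      have hW𝒯 : W ∈ 𝒯 := Set.mem_iUnion.mpr ⟨n, hF'sub n hWF⟩
      have hyW : y ∉ W := fun hy => hyV ⟨W, hWF, hy⟩
      refine ⟨W, ⟨hW𝒯, hxW, hyW⟩, ?_⟩
      show ⋃₀ F' (own W) = ⋃₀ F' n
      rw [hownspec W n (hF'sub n hWF)]
    refine ⟨⟨⟨hopen, hcov, hXnotin⟩, hlarge⟩, ?_⟩
    intro x hx y hy
    rcases hτ.2 x hx y hy with hside | hside
    · exact Or.inl (pat x y hside)
    · exact Or.inr (pat y x hside)
  -- LEMMA P : infinitely many indices with distinct values containing X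
  have lemP : ∀ (N : Set ℕ) (G : ℕ → Set (Set ℝ)),
      (∀ n ∈ N, G n ⊆ F n) → (∀ n ∈ N, X ⊆ ⋃₀ G n) →
      Set.InjOn (fun n => ⋃₀ G n) N → N.Infinite →
      ∃ F' : ℕ → Set (Set ℝ), (∀ n, F' n ⊆ 𝒰 n ∧ (F' n).Finite) ∧
        ((∃ n, ⋃₀ (F' n) = X) ∨ IsTauCover X (Set.range fun n => ⋃₀ (F' n))) := by
    intro N G hGsub hGcov hGinj hNinf
    set F' : ℕ → Set (Set ℝ) := fun n => if n ∈ N then G n else ∅ with hF'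
    have hF'sub : ∀ n, F' n ⊆ F n := by
      intro n
      by_cases hn : n ∈ N
      · simp only [hF', if_pos hn]; exact hGsub n hn
      · simp only [hF', if_neg hn]; exact empty_subset _
    refine ⟨F', (master F' hF'sub ?_).1, (master F' hF'sub ?_).2⟩ <;>
    · intro x hx
      have himg : ((fun n => ⋃₀ G n) '' N).Infinite := hNinf.image hGinj
      apply himg.mono
      rintro V ⟨n, hn, rfl⟩
      refine ⟨⟨n, ?_⟩, hGcov n hn (hx)⟩
      simp only [hF', if_pos hn]
  -- block values and the set of X-covering blocks
  set c : ℕ → Set ℝ := fun n => ⋃₀ F n with hcdef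
  set Np : Set ℕ := {n | (F n).Nonempty ∧ X ⊆ c n} with hNpdef
  by_cases hNpfin : Np.Finite
  · -- CASE 3 : the blocks themselves work
    have hA : ∀ x ∈ X, {V ∈ Set.range (fun n => ⋃₀ F n) | x ∈ V}.Infinite := by
      intro x hx
      have hD : ({n | ∃ W ∈ F n, x ∈ W} \ Np).Infinite := (hNx x hx).diff hNpfin
      have hinj : Set.InjOn c ({n | ∃ W ∈ F n, x ∈ W} \ Np) := by
        intro n hn m hm he
        by_contra hnm
        obtain ⟨Wn, hWn, _⟩ := hn.1
        obtain ⟨Wm, hWm, _⟩ := hm.1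
        have : X ⊆ ⋃₀ F m :=
          hVAL n m hnm (F n) (F m) Set.Subset.rfl Set.Subset.rfl ⟨Wn, hWn⟩ ⟨Wm, hWm⟩ he
        exact hm.2 ⟨⟨Wm, hWm⟩, this⟩
      apply (hD.image hinj).mono
      rintro V ⟨n, hn, rfl⟩
      obtain ⟨W, hW, hxW⟩ := hn.1
      exact ⟨⟨n, rfl⟩, ⟨W, hW, hxW⟩⟩
    exact ⟨F, (master F (fun n => Set.Subset.rfl) hA).1, (master F (fun n => Set.Subset.rfl) hA).2⟩
  have hNpinf : Np.Infinite := hNpfin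
  by_cases himg : (c '' Np).Finite
  · -- pigeonhole on values
    have hfib : ∃ y, {n ∈ Np | c n = y}.Infinite := by
      by_contra hcon
      push_neg at hcon
      apply hNpinf
      have hsub : Np ⊆ ⋃ y ∈ c '' Np, {n ∈ Np | c n = y} :=
        fun n hn => Set.mem_biUnion ⟨n, hn, rfl⟩ ⟨hn, rfl⟩
      refine (Set.Finite.biUnion himg (fun y _ => ?_)).subset hsub
      have := hcon y
      exact this
    obtain ⟨c₀, hc₀⟩ := hfib
    set Nc : Set ℕ := {n ∈ Np | c n = c₀} with hNcdef
    have hc₀X : X ⊆ c₀ := by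
      obtain ⟨n, hn⟩ := hc₀.nonempty
      rw [← hn.2]
      exact hn.1.2
    have hEx : ∀ n, n ∈ Nc → ∃ H, H ⊆ F n ∧ X ⊆ ⋃₀ H ∧ ∀ W ∈ H, ¬ X ⊆ ⋃₀ (H \ {W}) := by
      intro n hn
      have hcov : X ⊆ ⋃₀ F n := hn.1.2
      obtain ⟨H, h1, h2, h3⟩ := exists_minimal_cover hXne (F n) (hFfin n) hcov
      exact ⟨H, h1, h2, h3⟩
    set Eh : ℕ → Set (Set ℝ) := fun n => if h : n ∈ Nc then (hEx n h).choose else ∅ with hEhdef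
    have hEh : ∀ n ∈ Nc, Eh n ⊆ F n ∧ X ⊆ ⋃₀ Eh n ∧ ∀ W ∈ Eh n, ¬ X ⊆ ⋃₀ (Eh n \ {W}) := by
      intro n hn
      simp only [hEhdef, dif_pos hn]
      exact (hEx n hn).choose_spec
    have hEhne : ∀ n ∈ Nc, (Eh n).Nonempty := by
      intro n hn
      obtain ⟨x, hx⟩ := hXne
      obtain ⟨W, hW, _⟩ := (hEh n hn).2.1 hx
      exact ⟨W, hW⟩
    by_cases hN1 : {n ∈ Nc | ∃ W, Eh n = {W}}.Infinite
    · -- CASE 2a : infinitely many singleton minimal covers, values are distinct members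
      refine lemP {n ∈ Nc | ∃ W, Eh n = {W}} Eh (fun n hn => (hEh n hn.1).1)
        (fun n hn => (hEh n hn.1).2.1) ?_ hN1
      intro n hn m hm he
      obtain ⟨W, hW⟩ := hn.2
      obtain ⟨W', hW'⟩ := hm.2
      simp only at he
      rw [hW, hW'] at he
      simp only [Set.sUnion_singleton] at he
      subst he
      apply howner W n m
      · exact (hEh n hn.1).1 (by rw [hW]; exact rfl)
      · exact (hEh m hm.1).1 (by rw [hW']; exact rfl)
    · -- CASE 2b : the drop argument
      have hNcinf : Nc.Infinite := hc₀
      rw [Set.not_infinite] at hN1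
      set N2 : Set ℕ := Nc \ {n ∈ Nc | ∃ W, Eh n = {W}} with hN2def
      have hN2inf : N2.Infinite := hNcinf.diff hN1
      have hN2Nc : N2 ⊆ Nc := Set.diff_subset
      have htwo : ∀ n ∈ N2, ∀ Z : Set ℝ, ∃ W, W ∈ Eh n ∧ W ≠ Z := by
        intro n hn Z
        obtain ⟨W₁, hW₁⟩ := hEhne n (hN2Nc hn)
        by_cases hWZ : W₁ = Z
        · subst hWZ
          by_contra hcon
          push_neg at hcon
          apply hn.2
          refine ⟨hN2Nc hn, W₁, ?_⟩
          apply Set.Subset.antisymm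
          · intro W hW
            rw [Set.mem_singleton_iff]
            exact hcon W hW
          · intro W hW
            rw [Set.mem_singleton_iff] at hW
            rw [hW]
            exact hW₁
        · exact ⟨W₁, hW₁, hWZ⟩
      set thin : ℝ → ℕ → Prop := fun x n => ∃ W, {W' ∈ Eh n | x ∈ W'} = {W} with hthindef
      -- final assembly given drops with the serving property
      have final : ∀ Wd : ℕ → Set ℝ, (∀ n ∈ N2, Wd n ∈ Eh n) →
          (∀ x ∈ X, {n ∈ N2 | x ∈ ⋃₀ (Eh n \ {Wd n})}.Infinite) →
          ∃ F' : ℕ → Set (Set ℝ), (∀ n, F' n ⊆ 𝒰 n ∧ (F' n).Finite) ∧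
            ((∃ n, ⋃₀ (F' n) = X) ∨ IsTauCover X (Set.range fun n => ⋃₀ (F' n))) := by
        intro Wd hWd hserve
        set F' : ℕ → Set (Set ℝ) := fun n => if n ∈ N2 then Eh n \ {Wd n} else ∅ with hF'def
        have hF'sub : ∀ n, F' n ⊆ F n := by
          intro n
          by_cases hn : n ∈ N2
          · simp only [hF'def, if_pos hn]
            exact (Set.diff_subset).trans (hEh n (hN2Nc hn)).1
          · simp only [hF'def, if_neg hn]
            exact empty_subset _
        have hval : ∀ n ∈ N2, ¬ X ⊆ ⋃₀ (Eh n \ {Wd n}) := by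
          intro n hn
          exact (hEh n (hN2Nc hn)).2.2 (Wd n) (hWd n hn)
        have hlarge : ∀ x ∈ X, {V ∈ Set.range (fun n => ⋃₀ F' n) | x ∈ V}.Infinite := by
          intro x hx
          have hinj : Set.InjOn (fun n => ⋃₀ (Eh n \ {Wd n}))
              {n ∈ N2 | x ∈ ⋃₀ (Eh n \ {Wd n})} := by
            intro n hn m hm he
            by_contra hnm
            simp only at he
            have hEne : (Eh n \ {Wd n}).Nonempty := by
              obtain ⟨W, hW, _⟩ := hn.2
              exact ⟨W, hW⟩
            have hE'ne : (Eh m \ {Wd m}).Nonempty := by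
              obtain ⟨W, hW, _⟩ := hm.2
              exact ⟨W, hW⟩
            have : X ⊆ ⋃₀ (Eh m \ {Wd m}) :=
              hVAL n m hnm _ _ ((Set.diff_subset).trans (hEh n (hN2Nc hn.1)).1)
                ((Set.diff_subset).trans (hEh m (hN2Nc hm.1)).1) hEne hE'ne he
            exact hval m hm.1 this
          apply ((hserve x hx).image hinj).mono
          rintro V ⟨n, hn, rfl⟩
          refine ⟨⟨n, ?_⟩, hn.2⟩
          show ⋃₀ F' n = ⋃₀ (Eh n \ {Wd n})
          simp only [hF'def, if_pos hn.1]
        exact ⟨F', (master F' hF'sub hlarge).1, (master F' hF'sub hlarge).2⟩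
      -- the key analysis of a failing point
      have serveKey : ∀ Wd : ℕ → Set ℝ, (∀ n ∈ N2, Wd n ∈ Eh n) → ∀ x, x ∈ X →
          ({n ∈ N2 | x ∈ ⋃₀ (Eh n \ {Wd n})}).Finite →
          ({n ∈ N2 | ¬ thin x n}.Finite ∧
            (N2 \ {n ∈ N2 | x ∈ ⋃₀ (Eh n \ {Wd n})}).Infinite ∧
            ∀ n ∈ N2 \ {n ∈ N2 | x ∈ ⋃₀ (Eh n \ {Wd n})},
              {W' ∈ Eh n | x ∈ W'} = {Wd n}) := by
        intro Wd hWd x hx hfin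
        have hKinf : (N2 \ {n ∈ N2 | x ∈ ⋃₀ (Eh n \ {Wd n})}).Infinite := hN2inf.diff hfin
        have hwit : ∀ n ∈ N2 \ {n ∈ N2 | x ∈ ⋃₀ (Eh n \ {Wd n})},
            {W' ∈ Eh n | x ∈ W'} = {Wd n} := by
          intro n hn
          have hnN2 : n ∈ N2 := hn.1
          have hnot : x ∉ ⋃₀ (Eh n \ {Wd n}) := fun hcon => hn.2 ⟨hnN2, hcon⟩
          obtain ⟨W, hWE, hxW⟩ := (hEh n (hN2Nc hnN2)).2.1 hx
          have hWeq : W = Wd n := by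
            by_contra hne
            exact hnot ⟨W, ⟨hWE, fun hm => hne (Set.mem_singleton_iff.mp hm)⟩, hxW⟩
          apply Set.Subset.antisymm
          · rintro W' ⟨hW'E, hxW'⟩
            rw [Set.mem_singleton_iff]
            by_contra hne
            exact hnot ⟨W', ⟨hW'E, fun hm => hne (Set.mem_singleton_iff.mp hm)⟩, hxW'⟩
          · rintro W' hW'
            rw [Set.mem_singleton_iff] at hW'
            subst hW'
            exact ⟨hWd n hnN2, hWeq ▸ hxW⟩
        refine ⟨?_, hKinf, hwit⟩
        apply hfin.subset
        intro n hn
        by_contra hns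
        have hnK : n ∈ N2 \ {n ∈ N2 | x ∈ ⋃₀ (Eh n \ {Wd n})} := ⟨hn.1, hns⟩
        exact hn.2 ⟨Wd n, hwit n hnK⟩
      by_cases hdom : ∃ x₀, x₀ ∈ X ∧ {n ∈ N2 | ¬ thin x₀ n}.Finite
      · -- dominant point exists; drop away from its unique witnesses
        obtain ⟨x₀, hx₀X, hx₀fin⟩ := hdom
        set b₀ : ℕ → Set ℝ := fun n => if h : thin x₀ n then h.choose else ∅ with hb₀def
        have hb₀ : ∀ n, thin x₀ n → {W' ∈ Eh n | x₀ ∈ W'} = {b₀ n} := by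
          intro n hthin
          simp only [hb₀def, dif_pos hthin]
          exact hthin.choose_spec
        set Wd : ℕ → Set ℝ := fun n => if h : n ∈ N2 then (htwo n h (b₀ n)).choose else ∅
          with hWddef
        have hWdmem : ∀ n ∈ N2, Wd n ∈ Eh n := by
          intro n hn
          simp only [hWddef, dif_pos hn]
          exact (htwo n hn (b₀ n)).choose_spec.1
        have hWdne : ∀ n ∈ N2, Wd n ≠ b₀ n := by
          intro n hn
          simp only [hWddef, dif_pos hn]
          exact (htwo n hn (b₀ n)).choose_spec.2
        apply final Wd hWdmem
        intro x hx
        by_contra hinf2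
        rw [Set.not_infinite] at hinf2
        obtain ⟨hthinfin, hKinf, hwit⟩ := serveKey Wd hWdmem x hx hinf2
        set K : Set ℕ := N2 \ {n ∈ N2 | x ∈ ⋃₀ (Eh n \ {Wd n})} with hKdef
        set I : Set ℕ := K \ {n ∈ N2 | ¬ thin x₀ n} with hIdef
        have hIinf : I.Infinite := hKinf.diff hx₀fin
        have hIfacts : ∀ n ∈ I, x ∈ Wd n ∧ x₀ ∉ Wd n ∧ x₀ ∈ b₀ n ∧ x ∉ b₀ n ∧
            Wd n ∈ F n ∧ b₀ n ∈ F n := by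
          intro n hn
          have hnK : n ∈ K := hn.1
          have hnN2 : n ∈ N2 := hnK.1
          have hthin₀ : thin x₀ n := by
            by_contra hcon
            exact hn.2 ⟨hnN2, hcon⟩
          have hwx : {W' ∈ Eh n | x ∈ W'} = {Wd n} := hwit n hnK
          have hwx₀ : {W' ∈ Eh n | x₀ ∈ W'} = {b₀ n} := hb₀ n hthin₀
          have hxWd : x ∈ Wd n := by
            have : Wd n ∈ {W' ∈ Eh n | x ∈ W'} := by
              rw [hwx]; exact rfl
            exact this.2
          have hb₀mem : b₀ n ∈ Eh n ∧ x₀ ∈ b₀ n := by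
            have : b₀ n ∈ {W' ∈ Eh n | x₀ ∈ W'} := by
              rw [hwx₀]; exact rfl
            exact this
          have hx₀Wd : x₀ ∉ Wd n := by
            intro hcon
            have : Wd n ∈ {W' ∈ Eh n | x₀ ∈ W'} := ⟨hWdmem n hnN2, hcon⟩
            rw [hwx₀, Set.mem_singleton_iff] at this
            exact hWdne n hnN2 this
          have hxb₀ : x ∉ b₀ n := by
            intro hcon
            have : b₀ n ∈ {W' ∈ Eh n | x ∈ W'} := ⟨hb₀mem.1, hcon⟩
            rw [hwx, Set.mem_singleton_iff] at this
            exact hWdne n hnN2 this.symm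
          exact ⟨hxWd, hx₀Wd, hb₀mem.2, hxb₀,
            (hEh n (hN2Nc hnN2)).1 (hWdmem n hnN2), (hEh n (hN2Nc hnN2)).1 hb₀mem.1⟩
        have hAinf : {U ∈ 𝒯 | x ∈ U ∧ x₀ ∉ U}.Infinite := by
          have hinj : Set.InjOn Wd I := by
            intro n hn m hm he
            exact howner (Wd n) n m (hIfacts n hn).2.2.2.2.1 (he ▸ (hIfacts m hm).2.2.2.2.1)
          apply (hIinf.image hinj).mono
          rintro U ⟨n, hn, rfl⟩
          obtain ⟨h1, h2, _, _, h5, _⟩ := hIfacts n hn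
          exact ⟨Set.mem_iUnion.mpr ⟨n, h5⟩, h1, h2⟩
        have hBinf : {U ∈ 𝒯 | x₀ ∈ U ∧ x ∉ U}.Infinite := by
          have hinj : Set.InjOn b₀ I := by
            intro n hn m hm he
            exact howner (b₀ n) n m (hIfacts n hn).2.2.2.2.2 (he ▸ (hIfacts m hm).2.2.2.2.2)
          apply (hIinf.image hinj).mono
          rintro U ⟨n, hn, rfl⟩
          obtain ⟨_, _, h3, h4, _, h6⟩ := hIfacts n hn
          exact ⟨Set.mem_iUnion.mpr ⟨n, h6⟩, h3, h4⟩
        rcases hτ.2 x hx x₀ hx₀X with hs | hs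
        · exact hAinf hs
        · exact hBinf hs
      · -- no dominant point : any drops work
        push_neg at hdom
        set Wd : ℕ → Set ℝ := fun n => if h : n ∈ N2 then (hEhne n (hN2Nc h)).choose else ∅
          with hWddef
        have hWdmem : ∀ n ∈ N2, Wd n ∈ Eh n := by
          intro n hn
          simp only [hWddef, dif_pos hn]
          exact (hEhne n (hN2Nc hn)).choose_spec
        apply final Wd hWdmem
        intro x hx
        by_contra hinf2
        rw [Set.not_infinite] at hinf2
        obtain ⟨hthinfin, _, _⟩ := serveKey Wd hWdmem x hx hinf2
        exact hdom x hx hthinfin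
  · -- CASE 1' : infinitely many distinct X-covering block values
    have himginf : (c '' Np).Infinite := himg
    have hbig : ∀ B : Set (Set ℝ), B.Finite → ∃ n ∈ Np, c n ∉ B := by
      intro B hB
      obtain ⟨y, hy⟩ := (himginf.diff hB).nonempty
      obtain ⟨n, hn, rfl⟩ := hy.1
      exact ⟨n, hn, hy.2⟩
    obtain ⟨s, hsN, hsinj⟩ := exists_fresh_seq Np c hbig
    have hsinj' : Function.Injective s := by
      intro a b hab
      apply hsinj
      simp only [hab]
    refine lemP (Set.range s) F (fun n _ => Set.Subset.rfl) ?_ ?_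
      (Set.infinite_range_of_injective hsinj')
    · rintro n ⟨k, rfl⟩
      exact (hsN k).2
    · rintro n ⟨k, rfl⟩ m ⟨k', rfl⟩ he
      have : (fun j => c (s j)) k = (fun j => c (s j)) k' := he
      rw [hsinj this]
end

section
/- The critical cardinality of S1(Γ,Γ) equals 𝔟: the minimal cardinality of a set of real numbers not satisfying S1(Γ,Γ) is the unbounding number 𝔟. -/
open Set

/-- `S1 A B X`: for every sequence of countable open covers of `X` of type `A`
one can pick one member from each so that the chosen family is a cover of type `B`. -/
def S1 (A B : Set ℝ → Set (Set ℝ) → Prop) (X : Set ℝ) : Prop :=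
  ∀ 𝒰 : ℕ → Set (Set ℝ), (∀ n, (𝒰 n).Countable ∧ A X (𝒰 n)) →
    ∃ U : ℕ → Set ℝ, (∀ n, U n ∈ 𝒰 n) ∧ B X (Set.range U)

/-- The critical cardinality of a property `P` of sets of reals: the minimal cardinality
of a set of reals not satisfying `P`. -/
noncomputable def critCard (P : Set ℝ → Prop) : Cardinal :=
  sInf {c : Cardinal | ∃ X : Set ℝ, ¬ P X ∧ Cardinal.mk ↥X = c}

/-- `f ≤* g`: `f n ≤ g n` for all but finitely many `n`. -/
def EvAbove (f g : ℕ → ℕ) : Prop := ∀ᶠ n in Filter.atTop, f n ≤ g n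

/-- The unbounding number 𝔟: the minimal cardinality of a family of functions `ℕ → ℕ`
unbounded with respect to `≤*`. -/
noncomputable def bNum : Cardinal :=
  sInf {c : Cardinal | ∃ B : Set (ℕ → ℕ), Cardinal.mk ↥B = c ∧
    ∀ g : ℕ → ℕ, ∃ f ∈ B, ¬ EvAbove f g}


namespace S1GG

/-- good sequences: start ≥ 1, gaps ≥ 2 -/
def Good (S : ℕ → ℕ) : Prop := 1 ≤ S 0 ∧ ∀ n, S n + 2 ≤ S (n + 1)

variable {S T : ℕ → ℕ}

lemma Good.strictMono (hS : Good S) : StrictMono S :=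
  strictMono_nat_of_lt_succ fun n => by have := hS.2 n; omega

lemma Good.le_add (hS : Good S) (m i : ℕ) : S m + 2 * i ≤ S (i + m) := by
  induction i with
  | zero => simp
  | succ i ih =>
      have h2 := hS.2 (i + m)
      have : i + 1 + m = (i + m) + 1 := by omega
      rw [this]; omega

lemma Good.ge (hS : Good S) (n : ℕ) : 2 * n + 1 ≤ S n := by
  have h := hS.le_add 0 n
  have := hS.1; simp at h; omega

/-- the real coded by S -/
noncomputable def xr (S : ℕ → ℕ) : ℝ := ∑' n, (2⁻¹ : ℝ) ^ S n

lemma summable_good (hS : Good S) : Summable (fun n => (2⁻¹ : ℝ) ^ S n) := by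
  apply Summable.of_nonneg_of_le (fun n => by positivity)
    (fun n => ?_) (summable_geometric_of_lt_one (by norm_num) (by norm_num) : Summable fun n => (2⁻¹:ℝ)^n)
  exact pow_le_pow_of_le_one (by norm_num) (by norm_num) (by have := hS.ge n; omega)

lemma tail_le (hS : Good S) (m : ℕ) :
    ∑' i, (2⁻¹ : ℝ) ^ S (i + m) ≤ (2⁻¹ : ℝ) ^ S m * (4 / 3) := by
  have h1 : Summable (fun i => (2⁻¹ : ℝ) ^ S (i + m)) :=
    ((summable_good hS).comp_injective (add_left_injective m))
  have h2 : Summable (fun i : ℕ => (2⁻¹ : ℝ) ^ S m * (4⁻¹ : ℝ) ^ i) :=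
    (summable_geometric_of_lt_one (by norm_num) (by norm_num)).mul_left _
  calc ∑' i, (2⁻¹ : ℝ) ^ S (i + m) ≤ ∑' i : ℕ, (2⁻¹ : ℝ) ^ S m * (4⁻¹:ℝ) ^ i := by
        apply Summable.tsum_le_tsum _ h1 h2
        intro i
        have hle : S m + 2 * i ≤ S (i + m) := hS.le_add m i
        calc (2⁻¹ : ℝ) ^ S (i + m) ≤ (2⁻¹ : ℝ) ^ (S m + 2 * i) :=
              pow_le_pow_of_le_one (by norm_num) (by norm_num) hle
          _ = (2⁻¹ : ℝ) ^ S m * (4⁻¹:ℝ) ^ i := by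
              rw [pow_add, pow_mul]; norm_num
    _ = (2⁻¹ : ℝ) ^ S m * (4 / 3) := by
        rw [tsum_mul_left, tsum_geometric_of_lt_one (by norm_num) (by norm_num)]
        norm_num

lemma tail_ge (hS : Good S) (m : ℕ) :
    (2⁻¹ : ℝ) ^ S m ≤ ∑' i, (2⁻¹ : ℝ) ^ S (i + m) := by
  have h1 : Summable (fun i => (2⁻¹ : ℝ) ^ S (i + m)) :=
    ((summable_good hS).comp_injective (add_left_injective m))
  have := Summable.le_tsum h1 0 (fun i _ => by positivity)
  simpa using this

/-- index count: number of n with S n ≤ k -/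
noncomputable def cnt (S : ℕ → ℕ) (k : ℕ) : ℕ := sInf {n | k < S n}

lemma cnt_spec (hS : Good S) (k : ℕ) : k < S (cnt S k) :=
  Nat.sInf_mem (⟨k, by have := hS.ge k; simp; omega⟩ : {n | k < S n}.Nonempty)

lemma lt_cnt_iff (hS : Good S) {n k : ℕ} : n < cnt S k ↔ S n ≤ k := by
  constructor
  · intro h
    have := Nat.notMem_of_lt_sInf h
    simpa using this
  · intro h
    by_contra hc
    push_neg at hc
    have := hS.strictMono.monotone hc
    have := cnt_spec hS k
    omega

noncomputable def lo (S : ℕ → ℕ) (k : ℕ) : ℝ :=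
  ∑ i ∈ Finset.range (cnt S k), (2⁻¹ : ℝ) ^ S i

noncomputable def aN (S : ℕ → ℕ) (k : ℕ) : ℕ :=
  ∑ i ∈ Finset.range (cnt S k), 2 ^ (k - S i)

lemma lo_eq (hS : Good S) (k : ℕ) : lo S k = (aN S k : ℝ) / 2 ^ k := by
  rw [aN, lo, Nat.cast_sum, Finset.sum_div]
  apply Finset.sum_congr rfl
  intro i hi
  have hik : S i ≤ k := (lt_cnt_iff hS).1 (Finset.mem_range.1 hi)
  have : (2:ℝ) ^ (k - S i) * 2 ^ S i = 2 ^ k := by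
    rw [← pow_add, Nat.sub_add_cancel hik]
  push_cast
  rw [inv_pow, eq_div_iff (by positivity), eq_comm]
  calc (2:ℝ)^(k - S i) = ((2:ℝ) ^ (k - S i) * 2 ^ S i) * ((2:ℝ) ^ S i)⁻¹ := by
        field_simp
    _ = ((2:ℝ)^ S i)⁻¹ * 2 ^ k := by rw [this]; ring

lemma tile (hS : Good S) (k : ℕ) :
    lo S k < xr S ∧ xr S < lo S k + (2⁻¹ : ℝ) ^ k := by
  have hsum := summable_good hS
  have hsplit := Summable.sum_add_tsum_nat_add (cnt S k) hsum
  have hk : k + 1 ≤ S (cnt S k) := cnt_spec hS k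
  have hge := tail_ge hS (cnt S k)
  have hle := tail_le hS (cnt S k)
  have hpos : (0:ℝ) < (2⁻¹:ℝ) ^ S (cnt S k) := by positivity
  have hup : (2⁻¹ : ℝ) ^ S (cnt S k) * (4/3) < (2⁻¹:ℝ) ^ k := by
    have h1 : (2⁻¹ : ℝ) ^ S (cnt S k) ≤ (2⁻¹:ℝ) ^ (k+1) :=
      pow_le_pow_of_le_one (by norm_num) (by norm_num) hk
    have h2 : ((2:ℝ)⁻¹) ^ (k+1) = (2⁻¹:ℝ)^k * 2⁻¹ := pow_succ _ _
    nlinarith [pow_pos (show (0:ℝ) < 2⁻¹ by norm_num) k]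
  constructor
  · have : lo S k + (2⁻¹:ℝ) ^ S (cnt S k) ≤ xr S := by
      rw [xr, ← hsplit, lo]; gcongr
    linarith
  · have : xr S ≤ lo S k + (2⁻¹ : ℝ) ^ S (cnt S k) * (4/3) := by
      rw [xr, ← hsplit, lo]; gcongr
    linarith


lemma sum_range_two_pow (N : ℕ) : ∑ j ∈ Finset.range N, 2 ^ j = 2 ^ N - 1 := by
  induction N with
  | zero => simp
  | succ N ih =>
      rw [Finset.sum_range_succ, ih]
      have : 1 ≤ 2 ^ N := Nat.one_le_two_pow
      omega

lemma two_pow_sum_inj : ∀ (N : ℕ) (A B : Finset ℕ), A ⊆ Finset.range N → B ⊆ Finset.range N →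
    (∑ j ∈ A, 2 ^ j) = (∑ j ∈ B, 2 ^ j) → A = B := by
  intro N
  induction N with
  | zero => intro A B hA hB _; simp at hA hB; rw [hA, hB]
  | succ N ih =>
      intro A B hA hB hsum
      have key : ∀ C D : Finset ℕ, C ⊆ Finset.range (N+1) → D ⊆ Finset.range (N+1) →
          (∑ j ∈ C, 2 ^ j) = (∑ j ∈ D, 2 ^ j) → N ∈ C → N ∈ D := by
        intro C D hC hD hs hNC
        by_contra hND
        have hDN : D ⊆ Finset.range N := by
          intro x hx
          have := hD hx
          simp only [Finset.mem_range] at this ⊢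
          rcases Nat.lt_succ_iff_lt_or_eq.1 this with h | h
          · exact h
          · exact absurd (h ▸ hx) hND
        have h1 : (∑ j ∈ D, 2 ^ j) ≤ ∑ j ∈ Finset.range N, 2 ^ j :=
          Finset.sum_le_sum_of_subset hDN
        have h2 : 2 ^ N ≤ ∑ j ∈ C, 2 ^ j := Finset.single_le_sum (fun i _ => Nat.zero_le _) hNC
        rw [sum_range_two_pow] at h1
        have : 1 ≤ 2 ^ N := Nat.one_le_two_pow
        omega
      by_cases hN : N ∈ A
      · have hNB : N ∈ B := key A B hA hB hsum hN
        have hA' : A.erase N ⊆ Finset.range N := by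
          intro x hx
          have hx1 := Finset.mem_of_mem_erase hx
          have hx2 := Finset.ne_of_mem_erase hx
          have := hA hx1
          simp only [Finset.mem_range] at this ⊢
          omega
        have hB' : B.erase N ⊆ Finset.range N := by
          intro x hx
          have hx1 := Finset.mem_of_mem_erase hx
          have hx2 := Finset.ne_of_mem_erase hx
          have := hB hx1
          simp only [Finset.mem_range] at this ⊢
          omega
        have e1 : 2 ^ N + ∑ j ∈ A.erase N, 2 ^ j = ∑ j ∈ A, 2 ^ j :=
          Finset.add_sum_erase _ _ hN
        have e2 : 2 ^ N + ∑ j ∈ B.erase N, 2 ^ j = ∑ j ∈ B, 2 ^ j :=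
          Finset.add_sum_erase _ _ hNB
        have := ih (A.erase N) (B.erase N) hA' hB' (by omega)
        have hNA := hN
        have : A = insert N (A.erase N) := (Finset.insert_erase hN).symm
        rw [this, Finset.insert_erase hN] at *
        -- redo cleanly
        have hAe : A = insert N (A.erase N) := (Finset.insert_erase hN).symm
        have hBe : B = insert N (B.erase N) := (Finset.insert_erase hNB).symm
        rw [hAe, hBe, ih (A.erase N) (B.erase N) hA' hB' (by omega)]
      · have hNB : N ∉ B := fun h => hN (key B A hB hA hsum.symm h)
        have hA' : A ⊆ Finset.range N := by
          intro x hx; have := hA hx; simp only [Finset.mem_range] at this ⊢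
          rcases Nat.lt_succ_iff_lt_or_eq.1 this with h | h
          · exact h
          · exact absurd (h ▸ hx) hN
        have hB' : B ⊆ Finset.range N := by
          intro x hx; have := hB hx; simp only [Finset.mem_range] at this ⊢
          rcases Nat.lt_succ_iff_lt_or_eq.1 this with h | h
          · exact h
          · exact absurd (h ▸ hx) hNB
        exact ih A B hA' hB' hsum


variable {S T : ℕ → ℕ}

lemma cnt_eq_of_aN_eq (hS : Good S) (hT : Good T) {k : ℕ} (h : aN S k = aN T k) :
    cnt S k = cnt T k := by
  have inj : ∀ (R : ℕ → ℕ), Good R → Set.InjOn (fun i => k - R i) (Finset.range (cnt R k)) := by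
    intro R hR i hi j hj hij
    simp only [Finset.coe_range, Set.mem_Iio] at hi hj
    have hik : R i ≤ k := (lt_cnt_iff hR).1 hi
    have hjk : R j ≤ k := (lt_cnt_iff hR).1 hj
    have : R i = R j := by simp at hij; omega
    exact hR.strictMono.injective this
  have sub : ∀ (R : ℕ → ℕ), Good R →
      (Finset.range (cnt R k)).image (fun i => k - R i) ⊆ Finset.range (k+1) := by
    intro R hR x hx
    simp only [Finset.mem_image] at hx
    obtain ⟨i, _, rfl⟩ := hx
    simp only [Finset.mem_range]
    omega
  have se : ∀ (R : ℕ → ℕ), Good R →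
      ∑ j ∈ (Finset.range (cnt R k)).image (fun i => k - R i), 2 ^ j = aN R k := by
    intro R hR
    rw [Finset.sum_image (fun i hi j hj hij => inj R hR hi hj hij)]
    rfl
  have heq := two_pow_sum_inj (k+1) _ _ (sub S hS) (sub T hT) (by rw [se S hS, se T hT]; exact h)
  have c1 := Finset.card_image_of_injOn (inj S hS)
  have c2 := Finset.card_image_of_injOn (inj T hT)
  rw [heq] at c1
  rw [c1] at c2
  simpa using c2

lemma div_pow_key {k : ℕ} (a b : ℕ) (h : (a:ℝ)/2^k < (b:ℝ)/2^k + ((2:ℝ)^k)⁻¹) : a < b + 1 := by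
  have hp : (0:ℝ) < (2:ℝ)^k := by positivity
  rw [inv_eq_one_div, ← add_div] at h
  have : (a:ℝ) < (b:ℝ) + 1 := by
    have := (div_lt_div_iff_of_pos_right hp).1 h
    linarith
  exact_mod_cast this

lemma cnt_eq_of_mem_tile (hS : Good S) (hT : Good T) {k : ℕ}
    (h : xr T ∈ Ioo (lo S k) (lo S k + (2⁻¹ : ℝ) ^ k)) : cnt T k = cnt S k := by
  obtain ⟨h1, h2⟩ := h
  obtain ⟨h3, h4⟩ := tile hT k
  rw [lo_eq hS] at h1 h2
  rw [lo_eq hT] at h3 h4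
  rw [inv_pow] at h2 h4
  have e1 := div_pow_key (aN S k) (aN T k) (h1.trans h4)
  have e2 := div_pow_key (aN T k) (aN S k) (h3.trans h2)
  exact (cnt_eq_of_aN_eq hS hT (by omega)).symm

/-- The basic open sets -/
def U (n k : ℕ) : Set ℝ :=
  ⋃ S ∈ {S : ℕ → ℕ | Good S ∧ S n ≤ k}, Ioo (lo S k) (lo S k + (2⁻¹ : ℝ) ^ k)

lemma U_open (n k : ℕ) : IsOpen (U n k) :=
  isOpen_biUnion fun _ _ => isOpen_Ioo

lemma mem_U_iff (hT : Good T) {n k : ℕ} : xr T ∈ U n k ↔ T n ≤ k := by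
  constructor
  · rintro h
    simp only [U, mem_iUnion, mem_setOf_eq] at h
    obtain ⟨S, ⟨hS, hSn⟩, hmem⟩ := h
    have hc := cnt_eq_of_mem_tile hS hT hmem
    have h1 : n < cnt S k := (lt_cnt_iff hS).2 hSn
    exact (lt_cnt_iff hT).1 (by omega)
  · intro h
    simp only [U, mem_iUnion, mem_setOf_eq]
    exact ⟨T, ⟨hT, h⟩, (tile hT k).1, (tile hT k).2⟩

lemma xr_ne_dyadic (hT : Good T) (k q : ℕ) : xr T ≠ (q : ℝ) / 2 ^ k := by
  intro heq
  obtain ⟨h1, h2⟩ := tile hT k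
  rw [lo_eq hT, heq] at h1 h2
  rw [inv_pow] at h2
  have hp : (0:ℝ) < (2:ℝ)^k := by positivity
  have e1 : aN T k < q := by
    have := (div_lt_div_iff_of_pos_right hp).1 h1
    exact_mod_cast this
  have e2 := div_pow_key q (aN T k) h2
  omega

lemma xr_inj : ∀ {S T : ℕ → ℕ}, Good S → Good T → xr S = xr T → S = T := by
  have aux : ∀ (S T : ℕ → ℕ), Good S → Good T → xr S = xr T → ∀ n, S n < T n → False := by
    intro S T hS hT hxr n hn
    set k := S n with hk
    have h1 : n < cnt S k := (lt_cnt_iff hS).2 le_rfl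
    have h2 : ¬ n < cnt T k := by
      rw [lt_cnt_iff hT]; omega
    have hmem : xr T ∈ Ioo (lo S k) (lo S k + (2⁻¹:ℝ)^k) := by
      rw [← hxr]; exact ⟨(tile hS k).1, (tile hS k).2⟩
    have := cnt_eq_of_mem_tile hS hT hmem
    omega
  intro S T hS hT hxr
  funext n
  rcases lt_trichotomy (S n) (T n) with h | h | h
  · exact absurd (aux S T hS hT hxr n h) (fun x => x)
  · exact h
  · exact absurd (aux T S hT hS hxr.symm n h) (fun x => x)


variable {S T : ℕ → ℕ}

/-- transform an arbitrary function into a Good one dominating it -/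
def goodify (f : ℕ → ℕ) (n : ℕ) : ℕ := 2 * (n + ∑ k ∈ Finset.range (n+1), f k) + 1

lemma goodify_good (f : ℕ → ℕ) : Good (goodify f) := by
  constructor
  · simp [goodify]
  · intro n
    simp only [goodify, Finset.sum_range_succ (n := n+1)]
    omega

lemma le_goodify (f : ℕ → ℕ) (n : ℕ) : f n ≤ goodify f n := by
  have : f n ≤ ∑ k ∈ Finset.range (n+1), f k :=
    Finset.single_le_sum (fun i _ => Nat.zero_le _) (Finset.self_mem_range_succ n)
  simp only [goodify]; omega

lemma goodify_inj : Function.Injective goodify := by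
  intro f f' h
  have hs : ∀ n, ∑ k ∈ Finset.range (n+1), f k = ∑ k ∈ Finset.range (n+1), f' k := by
    intro n
    have := congrFun h n
    simp only [goodify] at this
    omega
  funext n
  induction n with
  | zero => have := hs 0; simpa using this
  | succ n ih =>
      have h1 := hs n
      have h2 := hs (n+1)
      rw [Finset.sum_range_succ, Finset.sum_range_succ (f := f')] at h2
      omega

/-- the unbounding set is nonempty -/
lemma bSet_nonempty : {c : Cardinal | ∃ B : Set (ℕ → ℕ), Cardinal.mk ↥B = c ∧
    ∀ g : ℕ → ℕ, ∃ f ∈ B, ¬ EvAbove f g}.Nonempty := by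
  refine ⟨_, Set.univ, rfl, fun g => ⟨fun n => g n + 1, trivial, ?_⟩⟩
  simp only [EvAbove, Filter.eventually_atTop, not_exists]
  intro N h
  have := h N le_rfl
  omega

lemma bNum_le_of_unbounded {B : Set (ℕ → ℕ)} (h : ∀ g : ℕ → ℕ, ∃ f ∈ B, ¬ EvAbove f g) :
    bNum ≤ Cardinal.mk ↥B :=
  csInf_le' ⟨B, rfl, h⟩

lemma exists_unbounded : ∃ B : Set (ℕ → ℕ), Cardinal.mk ↥B = bNum ∧
    ∀ g : ℕ → ℕ, ∃ f ∈ B, ¬ EvAbove f g := by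
  have := csInf_mem bSet_nonempty
  obtain ⟨B, hB1, hB2⟩ := this
  exact ⟨B, hB1, hB2⟩

lemma good_linear (j : ℕ) : Good (fun i => 2*i+1+j) :=
  ⟨by show 1 ≤ 2*0+1+j; omega, fun n => by show 2*n+1+j+2 ≤ 2*(n+1)+1+j; omega⟩

lemma not_evAbove_of_le {f h g : ℕ → ℕ} (hle : ∀ n, f n ≤ h n) (hn : ¬ EvAbove f g) :
    ¬ EvAbove h g := fun hev => hn (hev.mono fun n hn' => le_trans (hle n) hn')

theorem exists_X_not_S1 : ∃ X : Set ℝ, ¬ S1 IsGammaCover IsGammaCover X ∧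
    Cardinal.mk ↥X = bNum := by
  obtain ⟨B0, hmk, hunb⟩ := exists_unbounded
  set G : Set (ℕ → ℕ) := goodify '' B0 with hG
  set X : Set ℝ := xr '' G with hX
  have hGgood : ∀ S ∈ G, Good S := by rintro S ⟨f, _, rfl⟩; exact goodify_good f
  have hmkX : Cardinal.mk ↥X = bNum := by
    rw [hX, Cardinal.mk_image_eq_of_injOn _ _
      (fun S hS T hT h => xr_inj (hGgood S hS) (hGgood T hT) h),
      hG, Cardinal.mk_image_eq_of_injOn _ _ goodify_inj.injOn, hmk]
  refine ⟨X, ?_, hmkX⟩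
  intro hS1
  set 𝒰 : ℕ → Set (Set ℝ) := fun n => Set.range (fun j => U n (2*n+1+j)) with h𝒰
  have hhyp : ∀ n, (𝒰 n).Countable ∧ IsGammaCover X (𝒰 n) := by
    intro n
    refine ⟨countable_range _, ⟨?_, ?_, ?_⟩, ?_, ?_⟩
    · rintro W ⟨jj, rfl⟩; exact U_open _ _
    · rintro x ⟨S, hSG, rfl⟩
      have hS := hGgood S hSG
      have hge := hS.ge n
      refine mem_sUnion.2 ⟨U n (2*n+1+(S n - (2*n+1))), ⟨S n - (2*n+1), rfl⟩, ?_⟩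
      rw [show 2*n+1+(S n - (2*n+1)) = S n from by omega]
      exact (mem_U_iff hS).2 le_rfl
    · rintro ⟨jj, hjj⟩
      set k := 2*n+1+jj with hk
      set S₀ : ℕ → ℕ := fun i => 2*i+1+0 with hS₀def
      have hS₀ : Good S₀ := good_linear 0
      have hkS : S₀ n ≤ k := by show 2*n+1+0 ≤ 2*n+1+jj; omega
      have hy : (lo S₀ k + (2⁻¹:ℝ)^(k+1)) ∈ U n k := by
        refine Set.mem_biUnion (show S₀ ∈ {S : ℕ → ℕ | Good S ∧ S n ≤ k} from ⟨hS₀, hkS⟩) ?_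
        constructor
        · have : (0:ℝ) < (2⁻¹:ℝ)^(k+1) := by positivity
          linarith
        · have : (2⁻¹:ℝ)^(k+1) < (2⁻¹:ℝ)^k :=
            pow_lt_pow_right_of_lt_one₀ (by norm_num) (by norm_num) (Nat.lt_succ_self k)
          linarith
      rw [show U n k = X from hjj] at hy
      obtain ⟨S, hSG, hxr⟩ := hy
      apply xr_ne_dyadic (hGgood S hSG) (k+1) (2 * aN S₀ k + 1)
      rw [hxr, lo_eq hS₀]
      push_cast
      rw [pow_succ]
      field_simp
      simp only [one_div, inv_pow, mul_inv_cancel₀ (pow_ne_zero k (two_ne_zero' ℝ))]; ring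
    · apply Set.infinite_range_of_injective
      have key : ∀ j1 j2 : ℕ, j1 < j2 → U n (2*n+1+j1) ≠ U n (2*n+1+j2) := by
        intro j1 j2 hlt h
        have hT : Good (fun i => 2*i+1+j2) := good_linear j2
        have h2 : xr (fun i => 2*i+1+j2) ∈ U n (2*n+1+j2) := (mem_U_iff hT).2 (by omega)
        rw [show U n (2*n+1+j2) = U n (2*n+1+j1) from h.symm] at h2
        have := (mem_U_iff hT).1 h2
        omega
      intro j1 j2 h
      rcases lt_trichotomy j1 j2 with hl | he | hl
      · exact absurd h (key _ _ hl)
      · exact he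
      · exact absurd h.symm (key _ _ hl)
    · rintro x ⟨S, hSG, rfl⟩
      have hS := hGgood S hSG
      apply Set.Finite.subset ((Set.finite_Iio (S n)).image (fun jj => U n (2*n+1+jj)))
      rintro W ⟨⟨jj, rfl⟩, hxW⟩
      refine ⟨jj, ?_, rfl⟩
      simp only [mem_Iio]
      by_contra hge
      push_neg at hge
      exact hxW ((mem_U_iff hS).2 (by omega))
  obtain ⟨V, hV, hVγ⟩ := hS1 𝒰 hhyp
  choose j hj using hV
  set g : ℕ → ℕ := fun m => 2*m+1 + j m with hgdef
  have hVg : ∀ m, V m = U m (g m) := fun m => (hj m).symm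
  have hgge : ∀ m, 2*m+1 ≤ g m := fun m => by show 2*m+1 ≤ 2*m+1+j m; omega
  have hVinj : Function.Injective V := by
    have key : ∀ m m', m < m' → V m ≠ V m' := by
      intro m m' hmm' h
      set T : ℕ → ℕ := fun i => if i ≤ m then 2*i+1 else 2*i+1+2*(g m' + 1) with hTdef
      have hTgood : Good T := by
        constructor
        · show (if 0 ≤ m then 2*0+1 else 2*0+1+2*(g m'+1)) ≥ 1
          simp
        · intro i
          show (if i ≤ m then 2*i+1 else 2*i+1+2*(g m'+1)) + 2 ≤
            (if i+1 ≤ m then 2*(i+1)+1 else 2*(i+1)+1+2*(g m'+1))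
          by_cases h1 : i + 1 ≤ m <;> by_cases h2 : i ≤ m <;> simp [h1, h2] <;> omega
      have hTm : T m ≤ g m := by
        have := hgge m
        show (if m ≤ m then 2*m+1 else 2*m+1+2*(g m'+1)) ≤ g m
        simp
        omega
      have hTm' : ¬ T m' ≤ g m' := by
        have hle : ¬ m' ≤ m := by omega
        show ¬ (if m' ≤ m then 2*m'+1 else 2*m'+1+2*(g m'+1)) ≤ g m'
        simp [hle]
        omega
      rw [hVg m, hVg m'] at h
      have h2 := (mem_U_iff hTgood).2 hTm
      rw [h] at h2
      exact hTm' ((mem_U_iff hTgood).1 h2)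
    intro m m' h
    rcases lt_trichotomy m m' with hl | he | hl
    · exact absurd h (key _ _ hl)
    · exact he
    · exact absurd h.symm (key _ _ hl)
  obtain ⟨f, hfB, hnEv⟩ := hunb g
  have hSfG : goodify f ∈ G := ⟨f, hfB, rfl⟩
  have hSf := goodify_good f
  have hnEv' : ¬ EvAbove (goodify f) g := not_evAbove_of_le (le_goodify f) hnEv
  have hM : {m | ¬ goodify f m ≤ g m}.Infinite := by
    rw [← Nat.frequently_atTop_iff_infinite]
    exact Filter.not_eventually.mp hnEv'
  have hxX : xr (goodify f) ∈ X := ⟨goodify f, hSfG, rfl⟩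
  have hfin := hVγ.2.2 (xr (goodify f)) hxX
  have hsub : V '' {m | ¬ goodify f m ≤ g m} ⊆ {W ∈ Set.range V | xr (goodify f) ∉ W} := by
    rintro _ ⟨m, hm, rfl⟩
    refine ⟨⟨m, rfl⟩, fun hmem => hm ?_⟩
    rw [hVg m] at hmem
    exact (mem_U_iff hSf).1 hmem
  exact ((hM.image hVinj.injOn).mono hsub) hfin

/-- selection by recursion, avoiding previously chosen sets -/
noncomputable def pickList (e : ℕ → ℕ → Set ℝ) (g : ℕ → ℕ) : ℕ → List (Set ℝ)
  | 0 => []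
  | n+1 => pickList e g n ++ [e n (sInf {j | g n ≤ j ∧ e n j ∉ pickList e g n})]

noncomputable def pickIdx (e : ℕ → ℕ → Set ℝ) (g : ℕ → ℕ) (n : ℕ) : ℕ :=
  sInf {j | g n ≤ j ∧ e n j ∉ pickList e g n}

lemma pickList_succ (e : ℕ → ℕ → Set ℝ) (g : ℕ → ℕ) (n : ℕ) :
    pickList e g (n+1) = pickList e g n ++ [e n (pickIdx e g n)] := rfl

lemma pick_mem (e : ℕ → ℕ → Set ℝ) (g : ℕ → ℕ) {m n : ℕ} (h : m < n) :
    e m (pickIdx e g m) ∈ pickList e g n := by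
  induction n with
  | zero => omega
  | succ n ih =>
      rw [pickList_succ]
      rcases Nat.lt_succ_iff_lt_or_eq.1 h with h' | h'
      · exact List.mem_append_left _ (ih h')
      · subst h'
        exact List.mem_append_right _ (List.mem_singleton_self _)

theorem small_S1 (X : Set ℝ) (hlt : Cardinal.mk ↥X < bNum) :
    S1 IsGammaCover IsGammaCover X := by
  intro 𝒰 h𝒰
  have henum : ∀ n, ∃ e : ℕ → Set ℝ, Function.Injective e ∧ Set.range e = 𝒰 n := by
    intro n
    have hcnt : (𝒰 n).Countable := (h𝒰 n).1
    have hinf : (𝒰 n).Infinite := (h𝒰 n).2.2.1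
    obtain ⟨d⟩ := Set.countable_infinite_iff_nonempty_denumerable.1 ⟨hcnt, hinf⟩
    haveI := d
    refine ⟨fun j => ((Denumerable.eqv ↥(𝒰 n)).symm j : Set ℝ), ?_, ?_⟩
    · exact Subtype.val_injective.comp (Equiv.injective _)
    · ext W
      constructor
      · rintro ⟨j, rfl⟩
        exact ((Denumerable.eqv ↥(𝒰 n)).symm j).2
      · intro hW
        exact ⟨Denumerable.eqv ↥(𝒰 n) ⟨W, hW⟩, by simp⟩
  choose e he1 he2 using henum
  have hfx : ∀ (x : ↥X) (n : ℕ), {m | ∀ jj, m ≤ jj → (x:ℝ) ∈ e n jj}.Nonempty := by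
    intro x n
    have hγ := (h𝒰 n).2.2.2 (x:ℝ) x.2
    have hbad : {j | (x:ℝ) ∉ e n j}.Finite := by
      apply Set.Finite.subset (hγ.preimage (he1 n).injOn)
      intro j hj
      exact ⟨by rw [← he2 n]; exact ⟨j, rfl⟩, hj⟩
    obtain ⟨m0, hm0⟩ := hbad.bddAbove
    refine ⟨m0+1, fun jj hjj => ?_⟩
    by_contra hc
    have := hm0 hc
    omega
  set fx : ↥X → ℕ → ℕ := fun x n => sInf {m | ∀ jj, m ≤ jj → (x:ℝ) ∈ e n jj} with hfxdef
  have hfxs : ∀ (x : ↥X) (n jj : ℕ), fx x n ≤ jj → (x:ℝ) ∈ e n jj :=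
    fun x n => Nat.sInf_mem (hfx x n)
  have hbound : ∃ g, ∀ x : ↥X, EvAbove (fx x) g := by
    by_contra hc
    push_neg at hc
    have hub : ∀ g : ℕ → ℕ, ∃ f ∈ Set.range fx, ¬ EvAbove f g := by
      intro g
      obtain ⟨x, hx⟩ := hc g
      exact ⟨fx x, ⟨x, rfl⟩, hx⟩
    have h1 := bNum_le_of_unbounded hub
    have h2 := Cardinal.mk_range_le (f := fx)
    exact absurd ((h1.trans h2).trans_lt hlt) (lt_irrefl _)
  obtain ⟨g, hg⟩ := hbound
  have hsel : ∀ (n : ℕ) (L : List (Set ℝ)), {j | g n ≤ j ∧ e n j ∉ L}.Nonempty := by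
    intro n L
    have hfinL : {j | e n j ∈ L}.Finite := by
      apply Set.Finite.subset ((L.finite_toSet).preimage (he1 n).injOn)
      intro j hj
      exact hj
    obtain ⟨m0, hm0⟩ := hfinL.bddAbove
    refine ⟨max (g n) (m0+1), le_max_left _ _, fun hmem => ?_⟩
    have h1 := hm0 hmem
    have h2 := le_max_right (g n) (m0+1)
    omega
  set U' : ℕ → Set ℝ := fun n => e n (pickIdx e g n) with hU'def
  have hspec : ∀ n, g n ≤ pickIdx e g n ∧ e n (pickIdx e g n) ∉ pickList e g n :=
    fun n => Nat.sInf_mem (hsel n _)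
  have hU'mem : ∀ n, U' n ∈ 𝒰 n := fun n => by rw [← he2 n]; exact ⟨_, rfl⟩
  have hU'inj : Function.Injective U' := by
    have key : ∀ m n, m < n → U' m ≠ U' n := by
      intro m n h hEq
      have h1 : U' m ∈ pickList e g n := pick_mem e g h
      rw [hEq] at h1
      exact (hspec n).2 h1
    intro m n h
    rcases lt_trichotomy m n with hl | he' | hl
    · exact absurd h (key _ _ hl)
    · exact he'
    · exact absurd h.symm (key _ _ hl)
  refine ⟨U', hU'mem, ⟨?_, ?_, ?_⟩, ?_, ?_⟩
  · rintro W ⟨n, rfl⟩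
    exact (h𝒰 n).2.1.1 _ (hU'mem n)
  · intro x hx
    obtain ⟨N, hN⟩ := Filter.eventually_atTop.1 (hg ⟨x, hx⟩)
    refine mem_sUnion.2 ⟨U' N, ⟨N, rfl⟩, ?_⟩
    exact hfxs ⟨x, hx⟩ N _ (le_trans (hN N le_rfl) (hspec N).1)
  · rintro ⟨n, hn⟩
    exact (h𝒰 n).2.1.2.2 (hn ▸ hU'mem n)
  · exact Set.infinite_range_of_injective hU'inj
  · intro x hx
    obtain ⟨N, hN⟩ := Filter.eventually_atTop.1 (hg ⟨x, hx⟩)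
    apply Set.Finite.subset ((Set.finite_Iio N).image U')
    rintro W ⟨⟨n, rfl⟩, hxW⟩
    refine ⟨n, ?_, rfl⟩
    simp only [mem_Iio]
    by_contra hge
    push_neg at hge
    exact hxW (hfxs ⟨x, hx⟩ n _ (le_trans (hN n hge) (hspec n).1))

end S1GG

/-- The critical cardinality of `S1(Γ,Γ)` is 𝔟. -/
theorem critCard_s1_gamma_gamma :
    critCard (S1 IsGammaCover IsGammaCover) = bNum := by
  obtain ⟨X, hX, hmk⟩ := S1GG.exists_X_not_S1
  apply le_antisymm
  · exact csInf_le' ⟨X, hX, hmk⟩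
  · refine le_csInf ⟨bNum, X, hX, hmk⟩ ?_
    rintro c ⟨Y, hY, rfl⟩
    by_contra hlt
    push_neg at hlt
    exact hY (S1GG.small_S1 Y hlt)
end

section
/- The critical cardinality of Ufin(Γ,Γ) (the Hurewicz property) equals 𝔟: the minimal cardinality of a set of real numbers not satisfying Ufin(Γ,Γ) is the unbounding number 𝔟. -/
open Set

noncomputable section HurAux

/-- Sum of dyadic weights over a finite set of digit positions. -/
def aS (S : Finset ℕ) : ℝ := ∑ k ∈ S, (2:ℝ)⁻¹ ^ (k+1)

/-- The basic open sets: unions of open dyadic intervals of level `m+1` whose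
digit set has at least `n+1` ones among positions `0..m`. -/
def UU (n m : ℕ) : Set ℝ :=
  ⋃ S ∈ {S : Finset ℕ | S ⊆ Finset.range (m+1) ∧ n+1 ≤ S.card},
    Ioo (aS S) (aS S + (2:ℝ)⁻¹ ^ (m+1))

def Gap (e : ℕ → ℕ) : Prop := ∀ n, e n + 2 ≤ e (n+1)

def xe (e : ℕ → ℕ) : ℝ := ∑' k, (2:ℝ)⁻¹ ^ (e k + 1)

theorem Gap.strictMono {e : ℕ → ℕ} (he : Gap e) : StrictMono e :=
  strictMono_nat_of_lt_succ fun n => by have := he n; omega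

theorem Gap.add2 {e : ℕ → ℕ} (he : Gap e) (j i : ℕ) : e j + 2*i ≤ e (i + j) := by
  induction i with
  | zero => simpa using le_refl (e j)
  | succ i ih =>
    have h2 : e (i + j) + 2 ≤ e (i + 1 + j) := by
      have := he (i + j)
      have heq : i + j + 1 = i + 1 + j := by omega
      rwa [heq] at this
    omega

theorem summable_t {e : ℕ → ℕ} (he : Gap e) :
    Summable (fun k => (2:ℝ)⁻¹ ^ (e k + 1)) := by
  have hg : Summable (fun k : ℕ => (2:ℝ)⁻¹ ^ k) :=
    summable_geometric_of_lt_one (by norm_num) (by norm_num)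
  have hle : ∀ k : ℕ, (2:ℝ)⁻¹ ^ (e k + 1) ≤ (2:ℝ)⁻¹ ^ k := fun k =>
    pow_le_pow_of_le_one (by norm_num) (by norm_num)
      (le_trans (he.strictMono.le_apply) (by omega))
  exact Summable.of_nonneg_of_le (fun k => by positivity) hle hg

theorem tail_le {e : ℕ → ℕ} (he : Gap e) (j : ℕ) :
    ∑' i, (2:ℝ)⁻¹ ^ (e (i + j) + 1) ≤ 2/3 * (2:ℝ)⁻¹ ^ (e j) := by
  have hsum : Summable (fun i => (2:ℝ)⁻¹ ^ (e (i + j) + 1)) :=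
    (summable_nat_add_iff j).mpr (summable_t he)
  have hg : Summable (fun i : ℕ => (2:ℝ)⁻¹ ^ (e j + 1) * (4:ℝ)⁻¹ ^ i) :=
    (summable_geometric_of_lt_one (by norm_num) (by norm_num)).mul_left _
  have h1 : ∑' i, (2:ℝ)⁻¹ ^ (e (i + j) + 1) ≤ ∑' i : ℕ, (2:ℝ)⁻¹ ^ (e j + 1) * (4:ℝ)⁻¹ ^ i := by
    apply Summable.tsum_le_tsum _ hsum hg
    intro i
    have hle : e j + 1 + 2*i ≤ e (i + j) + 1 := by have := he.add2 j i; omega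
    calc (2:ℝ)⁻¹ ^ (e (i + j) + 1) ≤ (2:ℝ)⁻¹ ^ (e j + 1 + 2*i) :=
          pow_le_pow_of_le_one (by norm_num) (by norm_num) hle
      _ = (2:ℝ)⁻¹ ^ (e j + 1) * (4:ℝ)⁻¹ ^ i := by
          rw [pow_add, pow_mul]; norm_num
  rw [tsum_mul_left, tsum_geometric_of_lt_one (by norm_num) (by norm_num)] at h1
  calc ∑' i, (2:ℝ)⁻¹ ^ (e (i + j) + 1) ≤ (2:ℝ)⁻¹ ^ (e j + 1) * (1 - (4:ℝ)⁻¹)⁻¹ := h1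
    _ = 2/3 * (2:ℝ)⁻¹ ^ (e j) := by rw [pow_succ]; ring

theorem tail_pos {e : ℕ → ℕ} (he : Gap e) (j : ℕ) :
    0 < ∑' i, (2:ℝ)⁻¹ ^ (e (i + j) + 1) := by
  have hsum : Summable (fun i => (2:ℝ)⁻¹ ^ (e (i + j) + 1)) :=
    (summable_nat_add_iff j).mpr (summable_t he)
  have h0 : (2:ℝ)⁻¹ ^ (e (0 + j) + 1) ≤ ∑' i, (2:ℝ)⁻¹ ^ (e (i + j) + 1) :=
    Summable.le_tsum hsum 0 (fun i _ => by positivity)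
  have : (0:ℝ) < (2:ℝ)⁻¹ ^ (e (0 + j) + 1) := by positivity
  linarith

theorem tail_lt {e : ℕ → ℕ} (he : Gap e) (j : ℕ) :
    ∑' i, (2:ℝ)⁻¹ ^ (e (i + j) + 1) < (2:ℝ)⁻¹ ^ (e j) := by
  have h := tail_le he j
  have : (0:ℝ) < (2:ℝ)⁻¹ ^ (e j) := by positivity
  linarith

/-- Key structural lemma: for each `m` there is `j` such that `e k ≤ m ↔ k < j`, and
`xe e` lies in the open dyadic interval determined by the digits `e '' (range j)`. -/
theorem crucial {e : ℕ → ℕ} (he : Gap e) (m : ℕ) :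
    ∃ j : ℕ, (∀ k, e k ≤ m ↔ k < j) ∧
      xe e ∈ Ioo (aS ((Finset.range j).image e))
        (aS ((Finset.range j).image e) + (2:ℝ)⁻¹ ^ (m+1)) := by
  have hex : ∃ k, m < e k := ⟨m + 1, lt_of_lt_of_le (by omega) (he.strictMono.le_apply)⟩
  set j := Nat.find hex with hjdef
  have hiff : ∀ k, e k ≤ m ↔ k < j := by
    intro k
    constructor
    · intro hk
      by_contra hlt
      push_neg at hlt
      have hspec : m < e j := by rw [hjdef]; exact Nat.find_spec hex
      have hmono : e j ≤ e k := he.strictMono.monotone hlt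
      omega
    · intro hk
      have := Nat.find_min hex hk
      omega
  refine ⟨j, hiff, ?_⟩
  have hinj : Function.Injective e := he.strictMono.injective
  have hsum : aS ((Finset.range j).image e) = ∑ k ∈ Finset.range j, (2:ℝ)⁻¹ ^ (e k + 1) := by
    unfold aS
    rw [Finset.sum_image (fun a _ b _ h => hinj h)]
  have hsplit : (∑ k ∈ Finset.range j, (2:ℝ)⁻¹ ^ (e k + 1)) +
      (∑' i, (2:ℝ)⁻¹ ^ (e (i + j) + 1)) = xe e := Summable.sum_add_tsum_nat_add j (summable_t he)
  have hej : m + 1 ≤ e j := by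
    have := (hiff j).mpr
    by_contra hc
    push_neg at hc
    exact absurd ((hiff j).mp (by omega)) (lt_irrefl j)
  have htpos := tail_pos he j
  have htlt : ∑' i, (2:ℝ)⁻¹ ^ (e (i + j) + 1) < (2:ℝ)⁻¹ ^ (m+1) := by
    have h1 := tail_lt he j
    have h2 : (2:ℝ)⁻¹ ^ (e j) ≤ (2:ℝ)⁻¹ ^ (m+1) :=
      pow_le_pow_of_le_one (by norm_num) (by norm_num) hej
    linarith
  rw [hsum]
  constructor
  · linarith
  · linarith

theorem sum_Icc_pow : ∀ m a : ℕ, a ≤ m + 1 →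
    ∑ k ∈ Finset.Icc a m, (2:ℝ)⁻¹ ^ (k+1) = (2:ℝ)⁻¹ ^ a - (2:ℝ)⁻¹ ^ (m+1) := by
  intro m
  induction m with
  | zero =>
    intro a ha
    interval_cases a
    · norm_num [Finset.Icc_self]
    · norm_num
  | succ m ih =>
    intro a ha
    rcases Nat.lt_or_ge a (m + 2) with h | h
    · have ham : a ≤ m + 1 := by omega
      have hins : Finset.Icc a (m+1) = insert (m+1) (Finset.Icc a m) := by
        ext k
        simp only [Finset.mem_Icc, Finset.mem_insert]
        omega
      rw [hins, Finset.sum_insert (by simp [Finset.mem_Icc]), ih a ham]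
      rw [pow_succ]
      ring
    · have : a = m + 2 := by omega
      subst this
      rw [Finset.Icc_eq_empty (by omega)]
      simp

theorem aS_nonneg (S : Finset ℕ) : 0 ≤ aS S :=
  Finset.sum_nonneg fun k _ => by positivity

theorem aS_le {T : Finset ℕ} {a m : ℕ} (ha : a ≤ m + 1) (hT : T ⊆ Finset.Icc a m) :
    aS T ≤ (2:ℝ)⁻¹ ^ a - (2:ℝ)⁻¹ ^ (m+1) := by
  have h1 : aS T ≤ ∑ k ∈ Finset.Icc a m, (2:ℝ)⁻¹ ^ (k+1) :=
    Finset.sum_le_sum_of_subset_of_nonneg hT (fun k _ _ => by positivity)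
  rw [sum_Icc_pow m a ha] at h1
  exact h1

theorem aS_sep_aux {S T : Finset ℕ} {m d : ℕ}
    (hS : S ⊆ Finset.range (m+1)) (hT : T ⊆ Finset.range (m+1))
    (hdS : d ∈ S) (hdT : d ∉ T) (hmin : ∀ k ∈ T, k ∉ S → d ≤ k) :
    aS T + (2:ℝ)⁻¹ ^ (m+1) ≤ aS S := by
  have hdm : d ≤ m := by have := hS hdS; simp [Finset.mem_range] at this; omega
  have hsplitS : aS (S ∩ T) + aS (S \ T) = aS S := Finset.sum_inter_add_sum_sdiff S T _
  have hsplitT : aS (T ∩ S) + aS (T \ S) = aS T := Finset.sum_inter_add_sum_sdiff T S _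
  have hcomm : S ∩ T = T ∩ S := Finset.inter_comm S T
  have h1 : (2:ℝ)⁻¹ ^ (d+1) ≤ aS (S \ T) := by
    apply Finset.single_le_sum (f := fun k => (2:ℝ)⁻¹ ^ (k+1)) (fun k _ => by positivity)
    exact Finset.mem_sdiff.mpr ⟨hdS, hdT⟩
  have h2 : aS (T \ S) ≤ (2:ℝ)⁻¹ ^ (d+1) - (2:ℝ)⁻¹ ^ (m+1) := by
    apply aS_le (by omega)
    intro k hk
    rcases Finset.mem_sdiff.mp hk with ⟨hkT, hkS⟩
    have hk1 := hmin k hkT hkS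
    have hk2 : k ≠ d := fun h => hdT (h ▸ hkT)
    have hk3 : k ≤ m := by have := hT hkT; simp [Finset.mem_range] at this; omega
    simp [Finset.mem_Icc]; omega
  rw [hcomm] at hsplitS
  linarith

theorem aS_sep {S T : Finset ℕ} {m : ℕ}
    (hS : S ⊆ Finset.range (m+1)) (hT : T ⊆ Finset.range (m+1)) (hne : S ≠ T) :
    (2:ℝ)⁻¹ ^ (m+1) ≤ |aS S - aS T| := by
  have hD : ((S \ T) ∪ (T \ S)).Nonempty := by
    by_contra hemp
    rw [Finset.not_nonempty_iff_eq_empty, Finset.union_eq_empty] at hemp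
    apply hne
    apply Finset.Subset.antisymm
    · intro x hx
      by_contra hxT
      have : x ∈ S \ T := Finset.mem_sdiff.mpr ⟨hx, hxT⟩
      rw [hemp.1] at this
      exact absurd this (Finset.notMem_empty x)
    · intro x hx
      by_contra hxS
      have : x ∈ T \ S := Finset.mem_sdiff.mpr ⟨hx, hxS⟩
      rw [hemp.2] at this
      exact absurd this (Finset.notMem_empty x)
  set d := ((S \ T) ∪ (T \ S)).min' hD with hd
  have hdmem : d ∈ (S \ T) ∪ (T \ S) := Finset.min'_mem _ hD
  have hdmin : ∀ k ∈ (S \ T) ∪ (T \ S), d ≤ k := fun k hk => Finset.min'_le _ k hk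
  rcases Finset.mem_union.mp hdmem with h | h
  · rcases Finset.mem_sdiff.mp h with ⟨hdS, hdT⟩
    have := aS_sep_aux hS hT hdS hdT (fun k hkT hkS =>
      hdmin k (Finset.mem_union_right _ (Finset.mem_sdiff.mpr ⟨hkT, hkS⟩)))
    calc (2:ℝ)⁻¹ ^ (m+1) ≤ aS S - aS T := by linarith
      _ ≤ |aS S - aS T| := le_abs_self _
  · rcases Finset.mem_sdiff.mp h with ⟨hdT, hdS⟩
    have := aS_sep_aux hT hS hdT hdS (fun k hkS hkT =>
      hdmin k (Finset.mem_union_left _ (Finset.mem_sdiff.mpr ⟨hkS, hkT⟩)))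
    calc (2:ℝ)⁻¹ ^ (m+1) ≤ aS T - aS S := by linarith
      _ = -(aS S - aS T) := by ring
      _ ≤ |aS S - aS T| := neg_le_abs _

theorem mem_UU_iff {e : ℕ → ℕ} (he : Gap e) (n m : ℕ) :
    xe e ∈ UU n m ↔ e n ≤ m := by
  obtain ⟨j, hj, hIoo⟩ := crucial he m
  set A := (Finset.range j).image e with hA
  have hinj : Function.Injective e := he.strictMono.injective
  have hA1 : A ⊆ Finset.range (m+1) := by
    intro k hk
    rcases Finset.mem_image.mp hk with ⟨i, hi, rfl⟩
    rw [Finset.mem_range] at hi ⊢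
    have := (hj i).mpr hi
    omega
  have hAcard : A.card = j := by
    rw [hA, Finset.card_image_of_injective _ hinj, Finset.card_range]
  constructor
  · intro hx
    simp only [UU, Set.mem_iUnion, Set.mem_setOf_eq] at hx
    obtain ⟨S, ⟨hS1, hS2⟩, hxS⟩ := hx
    have hSA : S = A := by
      by_contra hne
      have hsep := aS_sep hS1 hA1 hne
      have h1 := hxS.1
      have h2 := hxS.2
      have h3 := hIoo.1
      have h4 := hIoo.2
      have : |aS S - aS A| < (2:ℝ)⁻¹ ^ (m+1) := abs_lt.mpr ⟨by linarith, by linarith⟩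
      linarith
    subst hSA
    rw [hAcard] at hS2
    exact (hj n).mpr (by omega)
  · intro hnm
    have hn : n < j := (hj n).mp hnm
    simp only [UU, Set.mem_iUnion, Set.mem_setOf_eq]
    exact ⟨A, ⟨hA1, by omega⟩, hIoo⟩

theorem isOpen_UU (n m : ℕ) : IsOpen (UU n m) :=
  isOpen_biUnion fun _ _ => isOpen_Ioo

theorem UU_empty {n m : ℕ} (h : m < n) : UU n m = ∅ := by
  ext x
  simp only [UU, Set.mem_iUnion, Set.mem_setOf_eq, Set.mem_empty_iff_false, iff_false]
  rintro ⟨S, ⟨hS1, hS2⟩, _⟩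
  have := Finset.card_le_card hS1
  rw [Finset.card_range] at this
  omega

theorem aS_mul {S : Finset ℕ} {M : ℕ} (hS : S ⊆ Finset.range (M+1)) :
    ∃ N : ℕ, aS S * 2^(M+1) = (N:ℝ) := by
  refine ⟨∑ k ∈ S, 2^(M-k), ?_⟩
  unfold aS
  rw [Finset.sum_mul]
  push_cast
  apply Finset.sum_congr rfl
  intro k hk
  have hkM : k ≤ M := by have := hS hk; rw [Finset.mem_range] at this; omega
  have hsplit : (2:ℝ)^(M+1) = 2^(k+1) * 2^(M-k) := by
    rw [← pow_add]
    congr 1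
    omega
  rw [hsplit, ← mul_assoc]
  have h1 : (2:ℝ)⁻¹ ^ (k+1) * 2^(k+1) = 1 := by
    rw [← mul_pow]
    norm_num
  rw [h1, one_mul]

theorem xe_ne_dyadic {e : ℕ → ℕ} (he : Gap e) (M : ℕ) (z : ℤ) :
    xe e * 2^(M+1) ≠ (z:ℝ) := by
  obtain ⟨j, _, hIoo⟩ := crucial he M
  set A := (Finset.range j).image e with hA
  have hinj : Function.Injective e := he.strictMono.injective
  have hA1 : A ⊆ Finset.range (M+1) := by
    intro k hk
    rcases Finset.mem_image.mp hk with ⟨i, hi, rfl⟩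
    rw [Finset.mem_range] at hi ⊢
    have := (‹∀ k, e k ≤ M ↔ k < j› i).mpr hi
    omega
  obtain ⟨N, hN⟩ := aS_mul hA1
  intro hz
  have hpow : (0:ℝ) < 2^(M+1) := by positivity
  have hone : (2:ℝ)⁻¹ ^ (M+1) * 2^(M+1) = 1 := by
    rw [← mul_pow]; norm_num
  have h1 : aS A * 2^(M+1) < xe e * 2^(M+1) := by
    apply mul_lt_mul_of_pos_right hIoo.1 hpow
  have h2 : xe e * 2^(M+1) < (aS A + (2:ℝ)⁻¹ ^ (M+1)) * 2^(M+1) :=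
    mul_lt_mul_of_pos_right hIoo.2 hpow
  rw [add_mul, hone] at h2
  rw [hN] at h1 h2
  rw [hz] at h1 h2
  have hz1 : (N:ℤ) < z := by exact_mod_cast h1
  have hz2 : z < (N:ℤ) + 1 := by exact_mod_cast h2
  omega

def enc (f : ℕ → ℕ) : ℕ → ℕ := fun n => 2 * (n + ∑ k ∈ Finset.range (n+1), f k)

theorem enc_gap (f : ℕ → ℕ) : Gap (enc f) := by
  intro n
  unfold enc
  rw [Finset.sum_range_succ _ (n+1)]
  omega

theorem le_enc (f : ℕ → ℕ) (n : ℕ) : f n ≤ enc f n := by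
  unfold enc
  have : f n ≤ ∑ k ∈ Finset.range (n+1), f k :=
    Finset.single_le_sum (fun k _ => Nat.zero_le _) (Finset.self_mem_range_succ n)
  omega

theorem enc_mono (f : ℕ → ℕ) : Monotone (enc f) := by
  intro a b hab
  unfold enc
  have : ∑ k ∈ Finset.range (a+1), f k ≤ ∑ k ∈ Finset.range (b+1), f k :=
    Finset.sum_le_sum_of_subset (Finset.range_subset_range.mpr (by omega))
  omega

/-- The witness distinguishing `UU n m` from `UU n m'` for `2*n ≤ m < m'`. -/
theorem UU_ne {n m m' : ℕ} (h2n : 2*n ≤ m) (hmm : m < m') : UU n m ≠ UU n m' := by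
  set e : ℕ → ℕ := fun k => m + 1 + 2*k - 2*n with he_def
  have he : Gap e := by
    intro k
    simp only [he_def]
    omega
  have hen : e n = m + 1 := by simp only [he_def]; omega
  have h1 : xe e ∉ UU n m := by
    rw [mem_UU_iff he]
    omega
  have h2 : xe e ∈ UU n m' := by
    rw [mem_UU_iff he]
    omega
  intro h
  rw [h] at h1
  exact h1 h2

/-- The n-th cover used in the hard direction. -/
def covU (n : ℕ) : Set (Set ℝ) := Set.range (UU n)

theorem covU_gamma {B : Set (ℕ → ℕ)} (hBne : B.Nonempty) (n : ℕ) :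
    (covU n).Countable ∧ IsGammaCover ((fun f => xe (enc f)) '' B) (covU n) := by
  set X := (fun f => xe (enc f)) '' B with hX
  have hXne : X.Nonempty := hBne.image _
  have hXnd : ∀ x ∈ X, ∀ (M : ℕ) (z : ℤ), x * 2^(M+1) ≠ (z:ℝ) := by
    rintro x ⟨f, _, rfl⟩ M z
    exact xe_ne_dyadic (enc_gap f) M z
  refine ⟨Set.countable_range _, ⟨⟨?_, ?_, ?_⟩, ?_, ?_⟩⟩
  · rintro U ⟨m, rfl⟩
    exact isOpen_UU n m
  · rintro x ⟨f, hf, rfl⟩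
    exact ⟨UU n (enc f n), ⟨enc f n, rfl⟩, (mem_UU_iff (enc_gap f) n _).mpr le_rfl⟩
  · rintro ⟨m, hm⟩
    rcases Nat.lt_or_ge m n with h | h
    · rw [UU_empty h] at hm
      exact hXne.ne_empty hm.symm
    · -- the dyadic point p ∈ UU n m but p ∉ X
      set p : ℝ := aS (Finset.range (n+1)) + (2:ℝ)⁻¹ ^ (m+2) with hp
      have hpU : p ∈ UU n m := by
        simp only [UU, Set.mem_iUnion, Set.mem_setOf_eq]
        refine ⟨Finset.range (n+1), ⟨Finset.range_subset_range.mpr (by omega), by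
          rw [Finset.card_range]⟩, ?_⟩
        rw [Set.mem_Ioo, hp]
        constructor
        · have : (0:ℝ) < (2:ℝ)⁻¹ ^ (m+2) := by positivity
          linarith
        · have : (2:ℝ)⁻¹ ^ (m+2) < (2:ℝ)⁻¹ ^ (m+1) := by
            apply pow_lt_pow_right_of_lt_one₀ (by norm_num) (by norm_num) (by omega)
          linarith
      have hpX : p ∉ X := by
        intro hmem
        obtain ⟨N, hN⟩ := aS_mul (M := m+1) (S := Finset.range (n+1))
          (Finset.range_subset_range.mpr (by omega))
        apply hXnd p hmem (m+1) ((N:ℤ) + 1)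
        rw [hp, add_mul, hN]
        have hone : (2:ℝ)⁻¹ ^ (m+2) * 2^(m+2) = 1 := by rw [← mul_pow]; norm_num
        rw [hone]
        push_cast
        ring
      rw [← hm] at hpX
      exact hpX hpU
  · -- infinite
    apply Set.infinite_of_injective_forall_mem (f := fun i : ℕ => UU n (2*n + i))
    · intro i i' hii
      by_contra hne
      rcases Nat.lt_or_ge i i' with h | h
      · exact UU_ne (by omega) (by omega) hii
      · have : i' < i := by omega
        exact UU_ne (m := 2*n+i') (m' := 2*n+i) (by omega) (by omega) hii.symm
    · intro i
      exact ⟨2*n + i, rfl⟩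
  · rintro x ⟨f, hf, rfl⟩
    apply Set.Finite.subset ((Set.finite_Iio (enc f n)).image (UU n))
    rintro U ⟨⟨m, rfl⟩, hU⟩
    refine ⟨m, ?_, rfl⟩
    simp only [Set.mem_Iio]
    by_contra hc
    push_neg at hc
    exact hU ((mem_UU_iff (enc_gap f) n m).mpr hc)

theorem not_ufin {B : Set (ℕ → ℕ)} (hB : ∀ g : ℕ → ℕ, ∃ f ∈ B, ¬ EvAbove f g) :
    ¬ Ufin IsGammaCover ((fun f => xe (enc f)) '' B) := by
  set X := (fun f => xe (enc f)) '' B with hX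
  have hBne : B.Nonempty := by
    obtain ⟨f, hf, _⟩ := hB (fun _ => 0)
    exact ⟨f, hf⟩
  classical
  intro hU
  obtain ⟨F, hF1, hF2⟩ := hU covU (covU_gamma hBne)
  -- the set-union sequence
  set s : ℕ → Set ℝ := fun n => ⋃₀ (F n) with hs
  -- index extraction: each member of F n is UU n m for some m
  have hidx : ∀ n, ∀ U ∈ F n, ∃ m, U = UU n m := by
    intro n U hUF
    rcases (hF1 n).1 hUF with ⟨m, rfl⟩
    exact ⟨m, rfl⟩
  -- bound function g
  have hg : ∃ g : ℕ → ℕ, ∀ n, ∀ U ∈ F n, ∃ m ≤ g n, U = UU n m := by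
    refine ⟨fun n => ((hF1 n).2.toFinset).sup
      (fun U => if h : ∃ m, U = UU n m then Classical.choose h else 0), ?_⟩
    intro n U hUF
    have hex : ∃ m, U = UU n m := hidx n U hUF
    refine ⟨Classical.choose hex, ?_, Classical.choose_spec hex⟩
    have hmem : U ∈ ((hF1 n).2.toFinset) := (Set.Finite.mem_toFinset _).mpr hUF
    have := Finset.le_sup (s := (hF1 n).2.toFinset)
      (f := fun U => if h : ∃ m, U = UU n m then Classical.choose h else 0) hmem
    simpa [dif_pos hex] using this
  obtain ⟨g, hg⟩ := hg
  -- key: membership in s n forces enc f n ≤ g n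
  have hkey : ∀ f ∈ B, ∀ n, xe (enc f) ∈ s n → enc f n ≤ g n := by
    intro f _ n hmem
    rcases hmem with ⟨U, hUF, hxU⟩
    obtain ⟨m, hm, rfl⟩ := hg n U hUF
    exact le_trans ((mem_UU_iff (enc_gap f) n m).mp hxU) hm
  rcases hF2 with ⟨n, hn⟩ | hγ
  · -- first alternative: X equals a union of open sets: impossible (dyadic density)
    have hopen : IsOpen (s n) := by
      apply isOpen_sUnion
      intro U hUF
      rcases hidx n U hUF with ⟨m, rfl⟩
      exact isOpen_UU n m
    have hopenX : IsOpen X := by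
      rw [← hn]
      exact hopen
    obtain ⟨f, hf⟩ := hBne
    have hxX : xe (enc f) ∈ X := ⟨f, hf, rfl⟩
    rcases Metric.isOpen_iff.mp hopenX _ hxX with ⟨ε, hε, hball⟩
    obtain ⟨M, hM⟩ := pow_unbounded_of_one_lt (ε⁻¹) (by norm_num : (1:ℝ) < 2)
    set x := xe (enc f) with hxdef
    set z : ℤ := ⌊x * 2^(M+1)⌋ + 1 with hz
    have hpow : (0:ℝ) < 2^(M+1) := by positivity
    set d : ℝ := z / 2^(M+1) with hd
    have h1 : x < d := by
      rw [hd, lt_div_iff₀ hpow, hz]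
      push_cast
      have := Int.lt_floor_add_one (x * 2^(M+1))
      linarith
    have h2 : d ≤ x + ((2:ℝ)^(M+1))⁻¹ := by
      rw [hd, div_le_iff₀ hpow, hz]
      push_cast
      have := Int.floor_le (x * 2^(M+1))
      have hne : ((2:ℝ)^(M+1))⁻¹ * 2^(M+1) = 1 := by
        field_simp
      nlinarith
    have hsmall : ((2:ℝ)^(M+1))⁻¹ < ε := by
      have h2M : ε⁻¹ < 2^M := hM
      have hεpos : (0:ℝ) < ε := hε
      have : (2:ℝ)^M < 2^(M+1) := by
        apply pow_lt_pow_right₀ (by norm_num)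
        omega
      have hinv : ((2:ℝ)^(M+1))⁻¹ < ((2:ℝ)^M)⁻¹ := by
        apply inv_strictAnti₀ (by positivity) this
      have : ((2:ℝ)^M)⁻¹ < ε := by
        rw [inv_lt_comm₀ (by positivity) hεpos]
        exact h2M
      linarith
    have hdX : d ∈ X := by
      apply hball
      rw [Metric.mem_ball, Real.dist_eq, abs_lt]
      constructor <;> nlinarith
    rcases hdX with ⟨f', hf', hfd⟩
    have hfd' : xe (enc f') = d := hfd
    apply xe_ne_dyadic (enc_gap f') M z
    rw [hfd', hd]
    field_simp
  · -- second alternative: the γ-cover of unions bounds the family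
    -- first occurrences
    set A : Set ℕ := {n | ∀ k < n, s k ≠ s n} with hA
    have hAup : ∀ n, ∃ a ∈ A, s a = s n := by
      intro n
      induction n using Nat.strong_induction_on with
      | _ n ih =>
        by_cases hn : n ∈ A
        · exact ⟨n, hn, rfl⟩
        · simp only [hA, Set.mem_setOf_eq] at hn
          push_neg at hn
          obtain ⟨k, hk, hsk⟩ := hn
          obtain ⟨a, ha, hsa⟩ := ih k hk
          exact ⟨a, ha, hsa.trans hsk⟩
    have hrange : Set.range s ⊆ s '' A := by
      rintro _ ⟨n, rfl⟩
      obtain ⟨a, ha, hsa⟩ := hAup n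
      exact ⟨a, ha, hsa⟩
    have hAinf : A.Infinite := by
      intro hfin
      exact (hγ.2.1.mono hrange) (hfin.image s)
    have hsinj : ∀ a ∈ A, ∀ a' ∈ A, a < a' → s a ≠ s a' := by
      intro a _ a' ha' hlt
      exact fun h => (ha' a hlt) h
    -- the challenge function
    set h : ℕ → ℕ := fun k => g (Nat.nth (· ∈ A) k) with hh
    obtain ⟨f, hf, hfh⟩ := hB h
    have hK : {k | ¬ f k ≤ h k}.Infinite := by
      rw [← Nat.frequently_atTop_iff_infinite]
      exact Filter.not_eventually.mp hfh
    have hxX : xe (enc f) ∈ X := ⟨f, hf, rfl⟩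
    have hbad := hγ.2.2 _ hxX
    have hnth_mem : ∀ k, Nat.nth (· ∈ A) k ∈ A := fun k => Nat.nth_mem_of_infinite hAinf k
    have hnth_mono : StrictMono (Nat.nth (· ∈ A)) := Nat.nth_strictMono hAinf
    -- x ∉ s (nth k) for k ∈ K
    have hnot : ∀ k ∈ {k | ¬ f k ≤ h k}, xe (enc f) ∉ s (Nat.nth (· ∈ A) k) := by
      intro k hk hmem
      have h1 := hkey f hf _ hmem
      have h2 : f k ≤ enc f k := le_enc f k
      have h3 : enc f k ≤ enc f (Nat.nth (· ∈ A) k) := enc_mono f (hnth_mono.le_apply)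
      simp only [Set.mem_setOf_eq, hh] at hk
      omega
    have hsub : (fun k => s (Nat.nth (· ∈ A) k)) '' {k | ¬ f k ≤ h k} ⊆
        {U | U ∈ Set.range s ∧ xe (enc f) ∉ U} := by
      rintro _ ⟨k, hk, rfl⟩
      exact ⟨⟨Nat.nth (· ∈ A) k, rfl⟩, hnot k hk⟩
    have hinjOn : Set.InjOn (fun k => s (Nat.nth (· ∈ A) k)) {k | ¬ f k ≤ h k} := by
      intro a ha b hb hab
      by_contra hne
      rcases Nat.lt_or_ge a b with hlt | hge
      · exact hsinj _ (hnth_mem a) _ (hnth_mem b) (hnth_mono hlt) hab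
      · have hlt : b < a := by omega
        exact hsinj _ (hnth_mem b) _ (hnth_mem a) (hnth_mono hlt) hab.symm
    have himg := Set.Infinite.image hinjOn hK
    exact (himg.mono hsub) hbad

theorem ufin_of_small {X : Set ℝ} (hX : Cardinal.mk ↥X < bNum) : Ufin IsGammaCover X := by
  classical
  intro 𝒰 h𝒰
  -- injective enumerations of the covers
  have henum : ∀ n, ∃ u : ℕ → Set ℝ, Function.Injective u ∧ Set.range u = 𝒰 n := by
    intro n
    have hcount : (𝒰 n).Countable := (h𝒰 n).1
    have hinf : (𝒰 n).Infinite := (h𝒰 n).2.2.1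
    haveI := hcount.to_subtype
    haveI := hinf.to_subtype
    obtain ⟨D⟩ := nonempty_denumerable (↥(𝒰 n))
    set e := (Denumerable.eqv (↥(𝒰 n))).symm
    refine ⟨fun k => (e k : Set ℝ), ?_, ?_⟩
    · exact fun a b hab => e.injective (Subtype.coe_injective hab)
    · ext U
      constructor
      · rintro ⟨k, rfl⟩
        exact (e k).2
      · intro hU
        exact ⟨e.symm ⟨U, hU⟩, by simp⟩
  choose u hu1 hu2 using henum
  have humem : ∀ n m, u n m ∈ 𝒰 n := fun n m => (hu2 n) ▸ ⟨m, rfl⟩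
  -- the bounding functions
  have hfx : ∀ x : ↥X, ∃ fx : ℕ → ℕ, ∀ n m, fx n ≤ m → (x:ℝ) ∈ u n m := by
    intro x
    have hex : ∀ n, ∃ N, ∀ m, N ≤ m → (x:ℝ) ∈ u n m := by
      intro n
      have hbadfin : {U ∈ 𝒰 n | (x:ℝ) ∉ U}.Finite := (h𝒰 n).2.2.2 _ x.2
      have hpre : {m : ℕ | (x:ℝ) ∉ u n m}.Finite := by
        apply Set.Finite.subset (hbadfin.preimage (Set.injOn_of_injective (hu1 n)))
        intro m hm
        exact ⟨humem n m, hm⟩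
      obtain ⟨N, hN⟩ := hpre.bddAbove
      refine ⟨N + 1, fun m hm => ?_⟩
      by_contra hxm
      have := hN hxm
      omega
    choose fx hfx using hex
    exact ⟨fx, hfx⟩
  choose fx hfxspec using hfx
  -- bound the family
  have hbound : ∃ g : ℕ → ℕ, ∀ x : ↥X, EvAbove (fx x) g := by
    by_contra hc
    push_neg at hc
    have hunb : ∀ g : ℕ → ℕ, ∃ f ∈ Set.range fx, ¬ EvAbove f g := by
      intro g
      obtain ⟨x, hx⟩ := hc g
      exact ⟨fx x, ⟨x, rfl⟩, hx⟩
    have h1 : bNum ≤ Cardinal.mk ↥(Set.range fx) :=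
      csInf_le' ⟨Set.range fx, rfl, hunb⟩
    have h2 : Cardinal.mk ↥(Set.range fx) ≤ Cardinal.mk ↥X := Cardinal.mk_range_le
    have := lt_of_le_of_lt (h1.trans h2) hX
    exact lt_irrefl _ this
  obtain ⟨g, hg⟩ := hbound
  -- recursive choice of pairwise distinct selected sets
  have hstep : ∀ (n : ℕ) (prev : Finset (Set ℝ)), ∃ m, g n ≤ m ∧ u n m ∉ prev := by
    intro n prev
    have hfin : ((u n)⁻¹' ↑prev ∪ Set.Iio (g n)).Finite :=
      ((prev.finite_toSet).preimage (Set.injOn_of_injective (hu1 n))).union (Set.finite_Iio _)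
    obtain ⟨m, hm⟩ := hfin.infinite_compl.nonempty
    simp only [Set.mem_compl_iff, Set.mem_union, Set.mem_preimage, Set.mem_Iio, not_or,
      not_lt, Finset.mem_coe] at hm
    exact ⟨m, hm.2, hm.1⟩
  set pick : ℕ → Finset (Set ℝ) → ℕ := fun n prev => Classical.choose (hstep n prev) with hpick
  have hpickspec : ∀ n prev, g n ≤ pick n prev ∧ u n (pick n prev) ∉ prev :=
    fun n prev => Classical.choose_spec (hstep n prev)
  set A : ℕ → Finset (Set ℝ) :=
    fun n => Nat.rec ∅ (fun k Ak => insert (u k (pick k Ak)) Ak) n with hA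
  set V : ℕ → Set ℝ := fun n => u n (pick n (A n)) with hV
  have hAsucc : ∀ n, A (n+1) = insert (V n) (A n) := fun n => rfl
  have hAmono : ∀ {k n}, k ≤ n → A k ⊆ A n := by
    intro k n hkn
    induction n with
    | zero => have : k = 0 := by omega
              subst this; exact Finset.Subset.refl _
    | succ n ih =>
      rcases Nat.lt_or_ge k (n+1) with h | h
      · refine Finset.Subset.trans (ih (by omega)) ?_
        rw [hAsucc]
        exact Finset.subset_insert _ _
      · have : k = n + 1 := by omega
        subst this; exact Finset.Subset.refl _
  have hmemA : ∀ {k n}, k < n → V k ∈ A n := by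
    intro k n hkn
    apply hAmono (Nat.succ_le_of_lt hkn)
    rw [hAsucc]
    exact Finset.mem_insert_self _ _
  have hVnotA : ∀ n, V n ∉ A n := fun n => (hpickspec n (A n)).2
  have hVinj : Function.Injective V := by
    intro a b hab
    by_contra hne
    rcases Nat.lt_or_ge a b with h | h
    · exact hVnotA b (hab ▸ hmemA h)
    · have h' : b < a := by omega
      exact hVnotA a (hab ▸ hmemA h')
  have hVmem : ∀ n, V n ∈ 𝒰 n := fun n => humem n _
  -- the selection
  refine ⟨fun n => {V n}, fun n => ⟨Set.singleton_subset_iff.mpr (hVmem n),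
    Set.finite_singleton _⟩, Or.inr ?_⟩
  have hsU : (fun n => ⋃₀ ({V n} : Set (Set ℝ))) = V := funext fun n => Set.sUnion_singleton _
  rw [hsU]
  -- range V is a γ-cover of X
  refine ⟨⟨?_, ?_, ?_⟩, ?_, ?_⟩
  · rintro U ⟨n, rfl⟩
    exact (h𝒰 n).2.1.1 _ (hVmem n)
  · intro x hx
    obtain ⟨n₀, hn₀⟩ := Filter.eventually_atTop.mp (hg ⟨x, hx⟩)
    refine ⟨V n₀, ⟨n₀, rfl⟩, ?_⟩
    apply hfxspec ⟨x, hx⟩ n₀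
    exact le_trans (hn₀ n₀ le_rfl) (hpickspec n₀ (A n₀)).1
  · rintro ⟨n, hVX⟩
    exact (h𝒰 n).2.1.2.2 (hVX ▸ hVmem n)
  · exact Set.infinite_range_of_injective hVinj
  · intro x hx
    obtain ⟨n₀, hn₀⟩ := Filter.eventually_atTop.mp (hg ⟨x, hx⟩)
    apply Set.Finite.subset ((Set.finite_Iio n₀).image V)
    rintro U ⟨⟨n, rfl⟩, hxU⟩
    refine ⟨n, ?_, rfl⟩
    simp only [Set.mem_Iio]
    by_contra hc
    push_neg at hc
    exact hxU (hfxspec ⟨x, hx⟩ n _ (le_trans (hn₀ n hc) (hpickspec n (A n)).1))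

/-- The critical cardinality of `Ufin(Γ,Γ)` (the Hurewicz property) is 𝔟. -/
theorem critCard_ufin_gamma_gamma :
    critCard (Ufin IsGammaCover) = bNum := by
  have hTne : {c : Cardinal | ∃ B : Set (ℕ → ℕ), Cardinal.mk ↥B = c ∧
      ∀ g : ℕ → ℕ, ∃ f ∈ B, ¬ EvAbove f g}.Nonempty := by
    refine ⟨Cardinal.mk ↥(Set.univ : Set (ℕ → ℕ)), Set.univ, rfl, ?_⟩
    intro g
    refine ⟨fun n => g n + 1, Set.mem_univ _, ?_⟩
    intro hev
    obtain ⟨n₀, hn₀⟩ := Filter.eventually_atTop.mp hev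
    have h := hn₀ n₀ le_rfl
    simp only [] at h
    omega
  have hmem : bNum ∈ {c : Cardinal | ∃ B : Set (ℕ → ℕ), Cardinal.mk ↥B = c ∧
      ∀ g : ℕ → ℕ, ∃ f ∈ B, ¬ EvAbove f g} := by
    unfold bNum
    exact csInf_mem hTne
  obtain ⟨B, hBcard, hBunb⟩ := hmem
  set X₀ := (fun f => xe (enc f)) '' B with hX₀
  have hnot : ¬ Ufin IsGammaCover X₀ := not_ufin hBunb
  have hle : Cardinal.mk ↥X₀ ≤ bNum := by
    rw [← hBcard]
    exact Cardinal.mk_image_le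
  have hge : bNum ≤ Cardinal.mk ↥X₀ := by
    by_contra hc
    push_neg at hc
    exact hnot (ufin_of_small hc)
  have hXeq : Cardinal.mk ↥X₀ = bNum := le_antisymm hle hge
  unfold critCard
  apply le_antisymm
  · apply csInf_le'
    exact ⟨X₀, hnot, hXeq⟩
  · have hne : {c : Cardinal | ∃ Y : Set ℝ, ¬ Ufin IsGammaCover Y ∧ Cardinal.mk ↥Y = c}.Nonempty :=
      ⟨bNum, X₀, hnot, hXeq⟩
    apply le_csInf hne
    rintro c ⟨Y, hYn, rfl⟩
    by_contra hc
    push_neg at hc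
    exact hYn (ufin_of_small hc)
end HurAux
end

section
/- The critical cardinality of Ufin(Γ,Ω) equals 𝔡: the minimal cardinality of a set of real numbers not satisfying Ufin(Γ,Ω) is the dominating number 𝔡. -/
open Set

/-- The dominating number 𝔡: the minimal cardinality of a family `D` of functions `ℕ → ℕ`
such that every `f : ℕ → ℕ` is `≤*` some member of `D`. -/
noncomputable def dNum : Cardinal :=
  sInf {c : Cardinal | ∃ D : Set (ℕ → ℕ), Cardinal.mk ↥D = c ∧
    ∀ f : ℕ → ℕ, ∃ g ∈ D, EvAbove f g}



namespace UfinProof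
open Finset

/-- cumulative sums: positions of binary ones. -/
def sf (h : ℕ → ℕ) (n : ℕ) : ℕ := ∑ k ∈ Finset.range (n+1), (h k + 2)

noncomputable def tm (h : ℕ → ℕ) (n : ℕ) : ℝ := (2:ℝ)⁻¹ ^ (sf h n)

noncomputable def pre (h : ℕ → ℕ) (n : ℕ) : ℝ := ∑ k ∈ Finset.range (n+1), tm h k

noncomputable def code (h : ℕ → ℕ) : ℝ := ∑' n, tm h n

lemma sf_succ (h : ℕ → ℕ) (n : ℕ) : sf h (n+1) = sf h n + (h (n+1) + 2) :=
  Finset.sum_range_succ _ _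

lemma sf_le_add (h : ℕ → ℕ) (k i : ℕ) : sf h k + 2*i ≤ sf h (k+i) := by
  induction i with
  | zero => simp
  | succ i ih =>
    have h2 : k + (i+1) = (k+i)+1 := by ring
    rw [h2, sf_succ h (k+i)]
    omega

lemma lt_sf (h : ℕ → ℕ) (n : ℕ) : n + 1 ≤ sf h n := by
  induction n with
  | zero => simp [sf]
  | succ n ih => have := sf_succ h n; omega

lemma tm_pos (h : ℕ → ℕ) (n : ℕ) : 0 < tm h n := by
  simp only [tm]; positivity

lemma tm_anti (h : ℕ → ℕ) {m n : ℕ} (hmn : m ≤ n) : tm h n ≤ tm h m := by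
  apply pow_le_pow_of_le_one (by norm_num) (by norm_num)
  calc sf h m ≤ sf h m + 2*(n-m) := by omega
  _ ≤ sf h (m + (n-m)) := sf_le_add h m (n-m)
  _ = sf h n := by congr 1; omega

lemma summable_tm (h : ℕ → ℕ) : Summable (tm h) := by
  refine Summable.of_nonneg_of_le (fun n => (tm_pos h n).le) (fun n => ?_)
    (summable_geometric_of_lt_one (r := (2⁻¹:ℝ)) (by norm_num) (by norm_num))
  show tm h n ≤ (2⁻¹:ℝ)^n
  apply pow_le_pow_of_le_one (by norm_num) (by norm_num)
  have := lt_sf h n; omega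

noncomputable def tail (h : ℕ → ℕ) (k : ℕ) : ℝ := ∑' i, tm h (k + i)

lemma summable_tail (h : ℕ → ℕ) (k : ℕ) : Summable (fun i => tm h (k + i)) := by
  simpa [add_comm] using (summable_nat_add_iff k).2 (summable_tm h)

lemma code_split (h : ℕ → ℕ) (k : ℕ) :
    code h = (∑ i ∈ Finset.range k, tm h i) + tail h k := by
  rw [code, ← Summable.sum_add_tsum_nat_add k (summable_tm h)]
  simp [tail, add_comm]

lemma tail_le (h : ℕ → ℕ) (k : ℕ) : tail h k ≤ (4/3) * tm h k := by
  have h1 : ∀ i, tm h (k + i) ≤ tm h k * (4⁻¹:ℝ)^i := by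
    intro i
    have h2 : sf h k + 2*i ≤ sf h (k+i) := sf_le_add h k i
    calc tm h (k+i) ≤ (2⁻¹:ℝ) ^ (sf h k + 2*i) :=
          pow_le_pow_of_le_one (by norm_num) (by norm_num) h2
    _ = tm h k * (4⁻¹:ℝ)^i := by
        rw [pow_add, pow_mul]; norm_num [tm]
  calc tail h k ≤ ∑' i, tm h k * (4⁻¹:ℝ)^i :=
        Summable.tsum_le_tsum h1 (summable_tail h k)
          ((summable_geometric_of_lt_one (by norm_num) (by norm_num)).mul_left _)
  _ = tm h k * (4/3) := by
      rw [tsum_mul_left, tsum_geometric_of_lt_one (by norm_num) (by norm_num)]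
      norm_num
  _ = (4/3) * tm h k := by ring

lemma lt_tail (h : ℕ → ℕ) (k : ℕ) : tm h k < tail h k := by
  have h1 : tail h k = tm h (k+0) + ∑' i, tm h (k + (i+1)) := by
    rw [tail, ← Summable.sum_add_tsum_nat_add 1 (summable_tail h k)]
    simp
  have h2 : 0 < ∑' i, tm h (k + (i+1)) := by
    have : ∀ i, tm h (k + (i+1)) = tm h ((k+1) + i) := fun i => by ring_nf
    rw [tsum_congr this]
    exact Summable.tsum_pos (summable_tail h (k+1)) (fun i => (tm_pos h _).le) 0 (tm_pos h _)
  rw [h1]; simpa using h2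

lemma tail_pos (h : ℕ → ℕ) (k : ℕ) : 0 < tail h k := (tm_pos h k).trans (lt_tail h k)

/-- L1: the code lies in the open interval determined by its prefix. -/
lemma code_mem (h : ℕ → ℕ) (n : ℕ) :
    code h ∈ Set.Ioo (pre h n) (pre h n + (2⁻¹:ℝ) ^ (sf h n + 1)) := by
  have hs := code_split h (n+1)
  have htail : tail h (n+1) ≤ (4/3) * tm h (n+1) := tail_le h (n+1)
  have h2 : tm h (n+1) ≤ (2⁻¹:ℝ)^(sf h n + 2) := by
    apply pow_le_pow_of_le_one (by norm_num) (by norm_num)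
    have := sf_succ h n; omega
  constructor
  · have := tail_pos h (n+1)
    rw [hs]; unfold pre; linarith
  · rw [hs]
    unfold pre
    have : (4/3:ℝ) * tm h (n+1) ≤ (4/3) * (2⁻¹:ℝ)^(sf h n + 2) := by linarith
    have h3 : (4/3:ℝ) * (2⁻¹:ℝ)^(sf h n + 2) < (2⁻¹:ℝ)^(sf h n + 1) := by
      rw [pow_succ, pow_succ]
      have : (0:ℝ) < (2⁻¹:ℝ)^(sf h n) := by positivity
      nlinarith
    linarith

lemma sf_congr {h h' : ℕ → ℕ} {i : ℕ} (he : ∀ j ≤ i, h' j = h j) : sf h' i = sf h i := by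
  unfold sf
  apply Finset.sum_congr rfl
  intro j hj
  rw [he j (by simpa [Nat.lt_succ_iff] using Finset.mem_range.mp hj)]

lemma sum_range_le_tail (h : ℕ → ℕ) (k m : ℕ) :
    ∑ j ∈ Finset.range m, tm h (k + j) ≤ (4/3) * tm h k := by
  calc ∑ j ∈ Finset.range m, tm h (k + j) ≤ tail h k :=
        Summable.sum_le_tsum _ (fun i _ => (tm_pos h _).le) (summable_tail h k)
  _ ≤ (4/3) * tm h k := tail_le h k

/-- L2: a code in the basic interval of `h` at level `n` has the same prefix. -/
lemma prefix_eq (h h' : ℕ → ℕ) (n : ℕ)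
    (hx : code h' ∈ Set.Ioo (pre h n) (pre h n + (2⁻¹:ℝ) ^ (sf h n + 1))) :
    ∀ k, k ≤ n → h' k = h k := by
  intro k
  induction k using Nat.strong_induction_on with
  | _ k ih =>
  intro hkn
  have hpre : ∀ j < k, h' j = h j := fun j hj => ih j hj (le_trans (le_of_lt hj) hkn)
  have hsum : ∑ i ∈ Finset.range k, tm h' i = ∑ i ∈ Finset.range k, tm h i := by
    apply Finset.sum_congr rfl
    intro i hi
    have : sf h' i = sf h i :=
      sf_congr (fun j hj => hpre j (lt_of_le_of_lt hj (Finset.mem_range.mp hi)))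
    simp [tm, this]
  set P : ℝ := ∑ i ∈ Finset.range k, tm h i with hP
  have hsplit' : code h' = P + tail h' k := by rw [code_split h' k, hsum]
  -- decomposition of pre h n
  have hdecomp : pre h n = P + ∑ j ∈ Finset.range (n+1-k), tm h (k + j) := by
    have hkk : k + (n+1-k) = n+1 := by omega
    have h1 : pre h n = ∑ i ∈ Finset.range (k + (n+1-k)), tm h i := by
      rw [hkk]; rfl
    rw [h1, Finset.sum_range_add, hP]
  have hups : (2⁻¹:ℝ) ^ (sf h n + 1) = 2⁻¹ * tm h n := by
    rw [pow_succ, tm]; ring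
  by_contra hne
  -- comparing sf at k
  have hsfk : sf h' k = (∑ j ∈ Finset.range k, (h j + 2)) + (h' k + 2) := by
    rw [sf, Finset.sum_range_succ]
    congr 1
    exact Finset.sum_congr rfl (fun j hj => by rw [hpre j (Finset.mem_range.mp hj)])
  have hsfk2 : sf h k = (∑ j ∈ Finset.range k, (h j + 2)) + (h k + 2) := by
    rw [sf, Finset.sum_range_succ]
  rcases lt_or_gt_of_ne hne with hlt | hgt
  · -- h' k < h k : code h' too big
    have e1 : sf h' k + 1 ≤ sf h k := by omega
    have t1 : tm h k ≤ 2⁻¹ * tm h' k := by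
      calc tm h k ≤ (2⁻¹:ℝ) ^ (sf h' k + 1) :=
            pow_le_pow_of_le_one (by norm_num) (by norm_num) e1
      _ = 2⁻¹ * tm h' k := by rw [pow_succ, tm]; ring
    have low : P + 2 * tm h k < code h' := by
      have := lt_tail h' k
      rw [hsplit']
      have : 2 * tm h k ≤ tm h' k := by linarith
      linarith [lt_tail h' k]
    have up : pre h n + (2⁻¹:ℝ) ^ (sf h n + 1) ≤ P + 2 * tm h k := by
      rw [hdecomp, hups]
      have s1 : ∑ j ∈ Finset.range (n+1-k), tm h (k + j) ≤ (4/3) * tm h k :=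
        sum_range_le_tail h k _
      have s2 : tm h n ≤ tm h k := tm_anti h hkn
      linarith [tm_pos h k]
    linarith [hx.2]
  · -- h' k > h k : code h' too small
    have e1 : sf h k + 1 ≤ sf h' k := by omega
    have t1 : tm h' k ≤ 2⁻¹ * tm h k := by
      calc tm h' k ≤ (2⁻¹:ℝ) ^ (sf h k + 1) :=
            pow_le_pow_of_le_one (by norm_num) (by norm_num) e1
      _ = 2⁻¹ * tm h k := by rw [pow_succ, tm]; ring
    have up : code h' ≤ P + (2/3) * tm h k := by
      rw [hsplit']
      have := tail_le h' k
      linarith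
    have low : P + tm h k ≤ pre h n := by
      rw [hdecomp]
      have h0 : (0:ℕ) ∈ Finset.range (n+1-k) := by
        simp; omega
      have := Finset.single_le_sum (f := fun j => tm h (k + j))
        (fun j _ => (tm_pos h _).le) h0
      simpa using this
    linarith [hx.1, tm_pos h k]

lemma pre_congr {h h' : ℕ → ℕ} {n : ℕ} (he : ∀ k, k ≤ n → h' k = h k) :
    pre h' n = pre h n := by
  unfold pre
  apply Finset.sum_congr rfl
  intro i hi
  have : sf h' i = sf h i := sf_congr (fun j hj =>
    he j (le_trans hj (Nat.lt_succ_iff.mp (Finset.mem_range.mp hi))))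
  simp [tm, this]

lemma code_mem_iff (a h' : ℕ → ℕ) (n : ℕ) :
    code h' ∈ Set.Ioo (pre a n) (pre a n + (2⁻¹:ℝ) ^ (sf a n + 1)) ↔
      ∀ k, k ≤ n → h' k = a k := by
  constructor
  · exact fun hx k hk => prefix_eq a h' n hx k hk
  · intro he
    have h1 : pre h' n = pre a n := pre_congr he
    have h2 : sf h' n = sf a n := sf_congr (fun j hj => he j hj)
    have := code_mem h' n
    rwa [h1, h2] at this

lemma midpoint_mem (a : ℕ → ℕ) (n : ℕ) :
    pre a n + (2⁻¹:ℝ) ^ (sf a n + 2) ∈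
      Set.Ioo (pre a n) (pre a n + (2⁻¹:ℝ) ^ (sf a n + 1)) := by
  constructor
  · have : (0:ℝ) < (2⁻¹:ℝ)^(sf a n + 2) := by positivity
    linarith
  · have h1 : ((2:ℝ)⁻¹)^(sf a n + 2) < (2⁻¹:ℝ)^(sf a n + 1) := by
      apply pow_lt_pow_right_of_lt_one₀ (by norm_num) (by norm_num)
      omega
    linarith

/-- L3: the dyadic midpoint of a basic interval is not a code. -/
lemma midpoint_not_code (a : ℕ → ℕ) (n : ℕ) (h' : ℕ → ℕ) :
    code h' ≠ pre a n + (2⁻¹:ℝ) ^ (sf a n + 2) := by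
  intro heq
  have hmem : code h' ∈ Set.Ioo (pre a n) (pre a n + (2⁻¹:ℝ)^(sf a n + 1)) := by
    rw [heq]; exact midpoint_mem a n
  have hp := prefix_eq a h' n hmem
  have h1 : pre h' n = pre a n := pre_congr hp
  have h2 : sf h' n = sf a n := sf_congr hp
  have hs : code h' = pre h' n + tail h' (n+1) := code_split h' (n+1)
  have htv : tail h' (n+1) = (2⁻¹:ℝ)^(sf h' n + 2) := by
    rw [h2]
    have := hs
    rw [h1] at this
    linarith [heq ▸ this]
  have hlow : tm h' (n+1) < tail h' (n+1) := lt_tail h' (n+1)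
  have hup : tail h' (n+1) ≤ (4/3) * tm h' (n+1) := tail_le h' (n+1)
  have hsf1 : sf h' (n+1) = sf h' n + (h' (n+1) + 2) := sf_succ h' n
  rcases Nat.eq_zero_or_pos (h' (n+1)) with h0 | h0
  · -- tm h' (n+1) = tail exactly, contradicting strict lower bound
    have : tm h' (n+1) = (2⁻¹:ℝ)^(sf h' n + 2) := by
      rw [tm, hsf1, h0]
    rw [this, ← htv] at hlow
    exact lt_irrefl _ hlow
  · have e1 : sf h' n + 3 ≤ sf h' (n+1) := by omega
    have e2 : tm h' (n+1) ≤ (2⁻¹:ℝ)^(sf h' n + 3) :=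
      pow_le_pow_of_le_one (by norm_num) (by norm_num) e1
    have e3 : ((2:ℝ)⁻¹)^(sf h' n + 3) = 2⁻¹ * (2⁻¹:ℝ)^(sf h' n + 2) := by
      rw [pow_succ]; ring
    have hpos : (0:ℝ) < (2⁻¹:ℝ)^(sf h' n + 2) := by positivity
    rw [htv] at hup
    nlinarith

/-- The basic open sets of the covers. -/
noncomputable def Uset (n m : ℕ) : Set ℝ :=
  ⋃ (a : ℕ → ℕ) (_ : ∀ k, k ≤ n → a k ≤ m),
    Set.Ioo (pre a n) (pre a n + (2⁻¹:ℝ) ^ (sf a n + 1))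

lemma isOpen_Uset (n m : ℕ) : IsOpen (Uset n m) :=
  isOpen_iUnion fun _ => isOpen_iUnion fun _ => isOpen_Ioo

lemma code_mem_Uset_iff (h : ℕ → ℕ) (n m : ℕ) :
    code h ∈ Uset n m ↔ ∀ k, k ≤ n → h k ≤ m := by
  constructor
  · intro hm
    simp only [Uset, Set.mem_iUnion] at hm
    obtain ⟨a, ha, hx⟩ := hm
    intro k hk
    rw [prefix_eq a h n hx k hk]
    exact ha k hk
  · intro hh
    simp only [Uset, Set.mem_iUnion]
    exact ⟨h, hh, code_mem h n⟩

lemma Uset_mono (n : ℕ) {m m' : ℕ} (hm : m ≤ m') : Uset n m ⊆ Uset n m' := by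
  apply Set.iUnion_mono
  intro a
  exact Set.iUnion_subset fun ha => Set.subset_iUnion_of_subset
    (fun k hk => le_trans (ha k hk) hm) subset_rfl

lemma Uset_injective (n : ℕ) : Function.Injective (Uset n) := by
  intro m m' hmm
  by_contra hne
  wlog hlt : m < m' generalizing m m'
  · exact this hmm.symm (Ne.symm hne) (by omega)
  have h1 : code (fun _ => m') ∈ Uset n m' :=
    (code_mem_Uset_iff _ n m').2 (fun k _ => le_refl m')
  have h2 : code (fun _ => m') ∉ Uset n m := by
    intro hc
    have := (code_mem_Uset_iff _ n m).1 hc 0 (Nat.zero_le n)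
    omega
  rw [hmm] at h2
  exact h2 h1

lemma exists_mem_Uset_not_code (n m : ℕ) : ∃ y ∈ Uset n m, ∀ h, code h ≠ y := by
  refine ⟨pre (fun _ => 0) n + (2⁻¹:ℝ)^(sf (fun _ => 0) n + 2), ?_, ?_⟩
  · simp only [Uset, Set.mem_iUnion]
    exact ⟨fun _ => 0, fun k _ => Nat.zero_le m, midpoint_mem _ n⟩
  · exact fun h => midpoint_not_code _ n h

noncomputable def covSeq (n : ℕ) : Set (Set ℝ) := Set.range (Uset n)

lemma gammaCover_covSeq (X : Set ℝ) (hcode : ∀ x ∈ X, ∃ h : ℕ → ℕ, x = code h) (n : ℕ) :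
    (covSeq n).Countable ∧ IsGammaCover X (covSeq n) := by
  refine ⟨Set.countable_range _, ⟨⟨?_, ?_, ?_⟩, ?_, ?_⟩⟩
  · rintro U ⟨m, rfl⟩
    exact isOpen_Uset n m
  · intro x hx
    obtain ⟨h, rfl⟩ := hcode x hx
    refine ⟨Uset n ((Finset.range (n+1)).sup h), ⟨_, rfl⟩, ?_⟩
    exact (code_mem_Uset_iff h n _).2
      (fun k hk => Finset.le_sup (Finset.mem_range.mpr (by omega)))
  · rintro ⟨m, hm⟩
    obtain ⟨y, hy, hyc⟩ := exists_mem_Uset_not_code n m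
    rw [hm] at hy
    obtain ⟨h, rfl⟩ := hcode y hy
    exact hyc h rfl
  · exact Set.infinite_range_of_injective (Uset_injective n)
  · intro x hx
    obtain ⟨h, rfl⟩ := hcode x hx
    set M := (Finset.range (n+1)).sup h with hM
    have hsub : {U ∈ covSeq n | code h ∉ U} ⊆ (Uset n) '' {m | m < M} := by
      rintro U ⟨⟨m, rfl⟩, hnm⟩
      refine ⟨m, ?_, rfl⟩
      by_contra hMm
      simp only [Set.mem_setOf_eq, not_lt] at hMm
      apply hnm
      exact (code_mem_Uset_iff h n m).2 (fun k hk =>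
        le_trans (Finset.le_sup (Finset.mem_range.mpr (by omega))) hMm)
    exact ((Set.finite_Iio M).image _).subset hsub

lemma dNum_mem : ∃ D : Set (ℕ → ℕ), Cardinal.mk ↥D = dNum ∧
    ∀ f : ℕ → ℕ, ∃ g ∈ D, EvAbove f g := by
  have hne : {c : Cardinal | ∃ D : Set (ℕ → ℕ), Cardinal.mk ↥D = c ∧
      ∀ f : ℕ → ℕ, ∃ g ∈ D, EvAbove f g}.Nonempty :=
    ⟨_, Set.univ, rfl, fun f => ⟨f, trivial, Filter.Eventually.of_forall fun n => le_refl _⟩⟩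
  exact csInf_mem hne

lemma aleph0_le_dNum : Cardinal.aleph0 ≤ dNum := by
  apply le_csInf
  · obtain ⟨D, hDc, hdom⟩ := dNum_mem
    exact ⟨dNum, D, hDc, hdom⟩
  rintro c ⟨D, hDc, hdom⟩
  by_contra hlt
  push_neg at hlt
  rw [← hDc] at hlt
  have hfin : D.Finite := Cardinal.lt_aleph0_iff_set_finite.mp hlt
  classical
  obtain ⟨g, hg, hev⟩ := hdom (fun n => hfin.toFinset.sup (fun g => g n) + 1)
  obtain ⟨n, hn⟩ := hev.exists
  have hle : g n ≤ hfin.toFinset.sup (fun g' => g' n) :=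
    Finset.le_sup (f := fun g' => g' n) (hfin.mem_toFinset.mpr hg)
  have hn' : hfin.toFinset.sup (fun g' => g' n) + 1 ≤ g n := hn
  exact Nat.not_succ_le_self _ (le_trans hn' hle)

lemma exists_not_ufin : ∃ X : Set ℝ, ¬ Ufin IsOmegaCover X ∧ Cardinal.mk ↥X ≤ dNum := by
  classical
  obtain ⟨D, hDc, hdom⟩ := dNum_mem
  set q : ↥D × ℕ → ℝ := fun p => code (Function.update (p.1 : ℕ → ℕ) 0 p.2) with hq
  set X : Set ℝ := Set.range q with hXdef
  have hcode : ∀ x ∈ X, ∃ h : ℕ → ℕ, x = code h := by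
    rintro x ⟨⟨g, v⟩, rfl⟩
    exact ⟨_, rfl⟩
  refine ⟨X, ?_, ?_⟩
  · intro hU
    obtain ⟨F, hF, hdisj⟩ := hU covSeq (fun n => gammaCover_covSeq X hcode n)
    have hfin : ∀ n, {m : ℕ | Uset n m ∈ F n}.Finite := fun n =>
      Set.Finite.preimage ((Uset_injective n).injOn) ((hF n).2)
    set f : ℕ → ℕ := fun n => (hfin n).toFinset.sup id with hf
    have hFsub : ∀ n, ⋃₀ F n ⊆ Uset n (f n) := by
      intro n x hx
      obtain ⟨U, hU, hxU⟩ := hx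
      obtain ⟨m, rfl⟩ : ∃ m, Uset n m = U := (hF n).1 hU
      have hm : m ∈ (hfin n).toFinset := (hfin n).mem_toFinset.mpr hU
      exact Uset_mono n (Finset.le_sup (f := id) hm) hxU
    obtain ⟨g, hgD, hev⟩ := hdom (fun n => f n + 1)
    obtain ⟨N, hN⟩ := Filter.eventually_atTop.mp hev
    set v : ℕ := (Finset.range (N+1)).sup f + 1 with hv
    set h : ℕ → ℕ := Function.update g 0 v with hh
    have hhX : code h ∈ X := ⟨(⟨g, hgD⟩, v), rfl⟩
    have hv0 : h 0 = v := Function.update_self 0 v g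
    have hkey : ∀ n, code h ∉ ⋃₀ F n := by
      intro n hc
      have hall := (code_mem_Uset_iff h n (f n)).1 (hFsub n hc)
      rcases le_or_gt N n with hNn | hNn
      · rcases Nat.eq_zero_or_pos n with rfl | hn0
        · have h1 := hall 0 (le_refl 0)
          have h2 : f 0 ≤ (Finset.range (N+1)).sup f :=
            Finset.le_sup (Finset.mem_range.mpr (by omega))
          omega
        · have h1 := hall n (le_refl n)
          have h2 : h n = g n := Function.update_of_ne (by omega) _ _
          have h3 : f n + 1 ≤ g n := hN n hNn
          omega
      · have h1 := hall 0 (Nat.zero_le n)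
        have h2 : f n ≤ (Finset.range (N+1)).sup f :=
          Finset.le_sup (Finset.mem_range.mpr (by omega))
        omega
    rcases hdisj with ⟨n, hn⟩ | homega
    · exact hkey n (hn ▸ hhX)
    · obtain ⟨⟨_, hsub, _⟩, _⟩ := homega
      obtain ⟨U, hUr, hxU⟩ := hsub hhX
      obtain ⟨n, rfl⟩ := hUr
      exact hkey n hxU
  · calc Cardinal.mk ↥X ≤ Cardinal.mk (↥D × ℕ) := Cardinal.mk_range_le
    _ = Cardinal.mk ↥D * Cardinal.mk ℕ := by
        rw [Cardinal.mk_prod]; simp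
    _ = dNum := by
        rw [hDc, Cardinal.mk_nat,
          Cardinal.mul_eq_max aleph0_le_dNum (le_refl _), max_eq_left aleph0_le_dNum]

lemma ufin_of_lt_dNum (X : Set ℝ) (hX : Cardinal.mk ↥X < dNum) :
    Ufin IsOmegaCover X := by
  classical
  intro 𝒰 h𝒰
  have henum : ∀ n, ∃ e : ℕ → Set ℝ, Function.Injective e ∧ Set.range e = 𝒰 n := by
    intro n
    have hc : (𝒰 n).Countable := (h𝒰 n).1
    have hi : (𝒰 n).Infinite := (h𝒰 n).2.2.1
    haveI := hc.to_subtype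
    haveI := hi.to_subtype
    obtain ⟨d⟩ := nonempty_denumerable ↥(𝒰 n)
    set E : ℕ ≃ ↥(𝒰 n) := (Denumerable.eqv ↥(𝒰 n)).symm
    refine ⟨fun m => (E m : Set ℝ), fun a b hab => E.injective (Subtype.ext hab), ?_⟩
    ext U
    constructor
    · rintro ⟨m, rfl⟩
      exact (E m).2
    · intro hU
      exact ⟨E.symm ⟨U, hU⟩, by simp⟩
  choose e he1 he2 using henum
  have hbnd : ∀ (x : ↥X) (n : ℕ), ∃ N, ∀ m, N ≤ m → (x : ℝ) ∈ e n m := by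
    intro x n
    have hfin := (h𝒰 n).2.2.2 (x : ℝ) x.2
    have hfin2 : {m | (x : ℝ) ∉ e n m}.Finite := by
      have hsub : {m | (x : ℝ) ∉ e n m} ⊆ e n ⁻¹' {U ∈ 𝒰 n | (x : ℝ) ∉ U} := by
        intro m hm
        exact ⟨by rw [← he2 n]; exact ⟨m, rfl⟩, hm⟩
      exact (hfin.preimage ((he1 n).injOn)).subset hsub
    obtain ⟨N, hN⟩ := hfin2.bddAbove
    refine ⟨N + 1, fun m hm => ?_⟩
    by_contra hc
    have := hN hc
    omega
  choose b hb using hbnd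
  set Dfam : Set (ℕ → ℕ) :=
    Set.range (fun s : Finset ↥X => fun n => s.sup (fun x => b x n)) with hDfam
  have hDlt : Cardinal.mk ↥Dfam < dNum := by
    refine lt_of_le_of_lt (Cardinal.mk_range_le) ?_
    rcases finite_or_infinite ↥X with hfX | hiX
    · haveI := hfX
      haveI := Fintype.ofFinite ↥X
      exact lt_of_lt_of_le (Cardinal.lt_aleph0_of_finite _) aleph0_le_dNum
    · rwa [Cardinal.mk_finset_of_infinite]
  have hnotdom : ¬ ∀ f : ℕ → ℕ, ∃ g ∈ Dfam, EvAbove f g := by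
    intro hdom
    have hmem : Cardinal.mk ↥Dfam ∈ {c : Cardinal | ∃ D : Set (ℕ → ℕ),
        Cardinal.mk ↥D = c ∧ ∀ f : ℕ → ℕ, ∃ g ∈ D, EvAbove f g} := ⟨Dfam, rfl, hdom⟩
    exact absurd (csInf_le (OrderBot.bddBelow _) hmem) (not_le.mpr hDlt)
  push_neg at hnotdom
  obtain ⟨f0, hf0⟩ := hnotdom
  set F : ℕ → Set (Set ℝ) := fun n => (e n) '' {m | m ≤ f0 n} with hF
  have hkey : ∀ s : Finset ↥X, ∃ n, ∀ x ∈ s, (x : ℝ) ∈ ⋃₀ F n := by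
    intro s
    have hne := hf0 _ ⟨s, rfl⟩
    rw [EvAbove, Filter.not_eventually] at hne
    obtain ⟨n, hn⟩ := hne.exists
    push_neg at hn
    refine ⟨n, fun x hx => ?_⟩
    refine ⟨e n (f0 n), ⟨f0 n, by simp, rfl⟩, ?_⟩
    apply hb x n
    have : b x n ≤ s.sup (fun x => b x n) := Finset.le_sup (f := fun x => b x n) hx
    omega
  refine ⟨F, fun n => ⟨?_, ?_⟩, ?_⟩
  · rintro U ⟨m, _, rfl⟩
    rw [← he2 n]
    exact ⟨m, rfl⟩
  · exact (Set.finite_Iic (f0 n)).image _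
  by_cases hex : ∃ n, ⋃₀ F n = X
  · exact Or.inl hex
  refine Or.inr ⟨⟨?_, ?_, ?_⟩, ?_⟩
  · rintro U ⟨n, rfl⟩
    apply isOpen_sUnion
    rintro V ⟨m, _, rfl⟩
    apply (h𝒰 n).2.1.1
    rw [← he2 n]
    exact ⟨m, rfl⟩
  · intro x hx
    obtain ⟨n, hn⟩ := hkey {⟨x, hx⟩}
    exact ⟨⋃₀ F n, ⟨n, rfl⟩, hn ⟨x, hx⟩ (Finset.mem_singleton_self _)⟩
  · rintro ⟨n, hn⟩
    exact hex ⟨n, hn⟩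
  · intro F' hfF' hsubF'
    have hS : {x : ↥X | (x : ℝ) ∈ F'}.Finite := by
      apply Set.Finite.preimage (Set.injOn_of_injective Subtype.val_injective) hfF'
    obtain ⟨n, hn⟩ := hkey hS.toFinset
    refine ⟨⋃₀ F n, ⟨n, rfl⟩, fun x hx => ?_⟩
    exact hn ⟨x, hsubF' hx⟩ (hS.mem_toFinset.mpr hx)

end UfinProof

/-- The critical cardinality of `Ufin(Γ,Ω)` is 𝔡. -/
theorem critCard_ufin_gamma_omega :
    critCard (Ufin IsOmegaCover) = dNum := by
  obtain ⟨X, hXnot, hXle⟩ := UfinProof.exists_not_ufin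
  have hlb : ∀ c ∈ {c : Cardinal | ∃ X : Set ℝ, ¬ Ufin IsOmegaCover X ∧
      Cardinal.mk ↥X = c}, dNum ≤ c := by
    rintro c ⟨Y, hY, rfl⟩
    by_contra hlt
    exact hY (UfinProof.ufin_of_lt_dNum Y (not_le.mp hlt))
  have hXeq : Cardinal.mk ↥X = dNum := le_antisymm hXle (hlb _ ⟨X, hXnot, rfl⟩)
  apply le_antisymm
  · exact csInf_le (OrderBot.bddBelow _) ⟨X, hXnot, hXeq⟩
  · exact le_csInf ⟨_, X, hXnot, hXeq⟩ hlb
end
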